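/- arXiv:1212.5754 — 4 statements merged into one kernel-verified Lean document; each statement's English description precedes it below -/
import Mathlib

section
/- Let Λ be a finite dimensional Frobenius k-algebra and V a finitely generated Λ-module with stable endomorphism ring isomorphic to k. Then the first syzygy ΩV (the kernel of a projective cover P_V → V) also has stable endomorphism ring isomorphic to k. -/
/-- A factorization of an endomorphism `f` of a `Λ`-module `M` through a projective
`Λ`-module. -/
structure ProjFactorization (Λ : Type) [Ring Λ] (M : Type) [AddCommGroup M] [Module Λ M]
    (f : M →ₗ[Λ] M) where
  P : Type
  [acg : AddCommGroup P]
  [mod : Module Λ P]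
  proj : Module.Projective Λ P
  g : M →ₗ[Λ] P
  h : P →ₗ[Λ] M
  fact : h.comp g = f

/-- `f` factors through some projective `Λ`-module. -/
def FactorsThroughProjective (Λ : Type) [Ring Λ] (M : Type) [AddCommGroup M] [Module Λ M]
    (f : M →ₗ[Λ] M) : Prop :=
  Nonempty (ProjFactorization Λ M f)

/-- The stable endomorphism ring of the `Λ`-module `M` is isomorphic to `k`:
every endomorphism is congruent, modulo those factoring through a projective module,
to a unique scalar multiple of the identity (in particular the identity itself does
not factor through a projective module). -/
def StableEndIsK (k Λ M : Type) [Field k] [Ring Λ] [Algebra k Λ]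
    [AddCommGroup M] [Module k M] [Module Λ M] [IsScalarTower k Λ M] : Prop :=
  (∀ f : M →ₗ[Λ] M, ∃ (c : k) (g : M →ₗ[Λ] M),
      (∀ x : M, g x = f x - c • x) ∧ FactorsThroughProjective Λ M g) ∧
    ¬ FactorsThroughProjective Λ M (LinearMap.id : M →ₗ[Λ] M)

section Aux

variable {k Λ : Type} [Field k] [Ring Λ] [Algebra k Λ]

/-- `k`-scalars commute with `Λ`-scalars. -/
lemma ksmul_comm' {N : Type} [AddCommGroup N] [Module k N] [Module Λ N]
    [IsScalarTower k Λ N] (c : k) (a : Λ) (x : N) : c • (a • x) = a • (c • x) := by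
  rw [← IsScalarTower.algebraMap_smul (A := Λ) c x,
    ← IsScalarTower.algebraMap_smul (A := Λ) c (a • x), ← mul_smul, ← mul_smul,
    Algebra.commutes]

/-- The map `b ↦ (a ↦ ε (a * b))`. -/
noncomputable def Rmap (ε : Λ →ₗ[k] k) : Λ →ₗ[k] (Λ →ₗ[k] k) where
  toFun b := ε ∘ₗ LinearMap.mulRight k b
  map_add' b b' := by ext a; simp [mul_add]
  map_smul' c b := by ext a; simp [mul_smul_comm]

@[simp] lemma Rmap_apply (ε : Λ →ₗ[k] k) (b a : Λ) : Rmap ε b a = ε (a * b) := rfl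

/-- From the Frobenius datum, obtain a functional `ε` whose associated pairing is
right-nondegenerate (the map `b ↦ ε (· * b)` is bijective). -/
lemma exists_pairing [FiniteDimensional k Λ]
    (frob : ∃ e : (Λ →ₗ[k] k) ≃ₗ[k] Λ,
      ∀ (f : Λ →ₗ[k] k) (a : Λ), e (f ∘ₗ LinearMap.mulLeft k a) = e f * a) :
    ∃ ε : Λ →ₗ[k] k, Function.Bijective (Rmap (k := k) (Λ := Λ) ε) := by
  obtain ⟨e, he⟩ := frob
  refine ⟨e.symm 1, ?_⟩
  set ε := e.symm 1 with hε
  have key : ∀ (f : Λ →ₗ[k] k) (b : Λ), f b = ε (e f * b) := by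
    intro f b
    have h1 : e (ε ∘ₗ LinearMap.mulLeft k (e f)) = e f := by
      rw [he]; simp [hε]
    have h2 : ε ∘ₗ LinearMap.mulLeft k (e f) = f := e.injective h1
    conv_lhs => rw [← h2]
    rfl
  have hinj : Function.Injective (Rmap (k := k) (Λ := Λ) ε) := by
    rw [← LinearMap.ker_eq_bot, LinearMap.ker_eq_bot']
    intro b hb
    rw [← Module.forall_dual_apply_eq_zero_iff k b]
    intro φ
    have h0 : Rmap ε b (e φ) = 0 := by rw [hb]; rfl
    rw [key φ b]
    simpa using h0
  have hinj2 : Function.Injective (e.toLinearMap ∘ₗ Rmap (k := k) (Λ := Λ) ε) := by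
    simpa using e.injective.comp hinj
  have hsurj2 := LinearMap.injective_iff_surjective.mp hinj2
  refine ⟨hinj, fun f => ?_⟩
  obtain ⟨b, hb⟩ := hsurj2 (e f)
  exact ⟨b, e.injective (by simpa using hb)⟩

/-- Baer-type extension: any `Λ`-linear map from a submodule of `N` to `Λ`
extends to all of `N` (self-injectivity of the Frobenius algebra `Λ`). -/
lemma extend_to_ring [FiniteDimensional k Λ] {ε : Λ →ₗ[k] k}
    (hbij : Function.Bijective (Rmap (k := k) (Λ := Λ) ε))
    {N : Type} [AddCommGroup N] [Module k N] [Module Λ N] [IsScalarTower k Λ N]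
    (W : Submodule Λ N) (f : ↥W →ₗ[Λ] Λ) :
    ∃ F : N →ₗ[Λ] Λ, ∀ w : W, F ↑w = f w := by
  -- a k-linear functional ψ on N extending ε ∘ f
  obtain ⟨ψ, hψ⟩ : ∃ ψ : N →ₗ[k] k, ∀ (x : N) (hx : x ∈ W), ψ x = ε (f ⟨x, hx⟩) := by
    obtain ⟨W', hW'⟩ := Submodule.exists_isCompl (W.restrictScalars k)
    set q := Submodule.linearProjOfIsCompl _ _ hW' with hq
    have hmem : ∀ n : N, ((q n : N)) ∈ W := fun n => (q n).2
    refine ⟨{ toFun := fun n => ε (f ⟨q n, hmem n⟩)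
              map_add' := by
                intro n n'
                show ε (f ⟨q (n + n'), hmem _⟩) = ε (f ⟨q n, hmem n⟩) + ε (f ⟨q n', hmem n'⟩)
                have h : (⟨q (n + n'), hmem _⟩ : ↥W) = ⟨q n, hmem n⟩ + ⟨q n', hmem n'⟩ := by
                  apply Subtype.ext; simp
                rw [h, map_add, map_add]
              map_smul' := by
                intro c n
                show ε (f ⟨q (c • n), hmem _⟩) = (RingHom.id k) c • ε (f ⟨q n, hmem n⟩)
                have h : (⟨q (c • n), hmem _⟩ : ↥W) = c • (⟨q n, hmem n⟩ : ↥W) := by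
                  apply Subtype.ext; simp
                rw [h, LinearMap.map_smul_of_tower, map_smul]
                rfl }, ?_⟩
    intro x hx
    have hx' : x ∈ W.restrictScalars k := hx
    have hqx : q x = ⟨x, hx'⟩ := Submodule.linearProjOfIsCompl_apply_left hW' ⟨x, hx'⟩
    show ε (f ⟨q x, hmem x⟩) = ε (f ⟨x, hx⟩)
    have h2 : (⟨q x, hmem x⟩ : ↥W) = ⟨x, hx⟩ := by
      apply Subtype.ext
      show ((q x : N)) = x
      rw [hqx]
    rw [h2]
  set Re := LinearEquiv.ofBijective _ hbij with hRe
  have hReapp : ∀ b, Re b = Rmap ε b := fun _ => rfl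
  -- the candidate extension
  let hfun : N → (Λ →ₗ[k] k) := fun n =>
    { toFun := fun a => ψ (a • n)
      map_add' := by
        intro a a'
        show ψ ((a + a') • n) = ψ (a • n) + ψ (a' • n)
        rw [add_smul, map_add]
      map_smul' := by
        intro c a
        show ψ ((c • a) • n) = (RingHom.id k) c • ψ (a • n)
        rw [smul_assoc, map_smul]
        rfl }
  have hfun_apply : ∀ n a, hfun n a = ψ (a • n) := fun _ _ => rfl
  refine ⟨{ toFun := fun n => Re.symm (hfun n)
            map_add' := by
              intro n n'
              show Re.symm (hfun (n + n')) = Re.symm (hfun n) + Re.symm (hfun n')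
              have h : hfun (n + n') = hfun n + hfun n' := by
                ext a
                show ψ (a • (n + n')) = ψ (a • n) + ψ (a • n')
                rw [smul_add, map_add]
              rw [h, map_add]
            map_smul' := by
              intro a n
              show Re.symm (hfun (a • n)) = a • Re.symm (hfun n)
              apply Re.injective
              rw [LinearEquiv.apply_symm_apply]
              ext b
              show ψ (b • a • n) = ε (b * (a * Re.symm (hfun n)))
              calc ψ (b • a • n) = ψ ((b * a) • n) := by rw [mul_smul]
                _ = hfun n (b * a) := (hfun_apply n (b * a)).symm
                _ = Re (Re.symm (hfun n)) (b * a) := by rw [Re.apply_symm_apply]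
                _ = ε ((b * a) * Re.symm (hfun n)) := rfl
                _ = ε (b * (a * Re.symm (hfun n))) := by rw [mul_assoc] }, ?_⟩
  intro w
  show Re.symm (hfun ↑w) = f w
  rw [LinearEquiv.symm_apply_eq]
  ext b
  rw [hReapp, Rmap_apply, hfun_apply]
  have hbw : (b • (w : N)) ∈ W := W.smul_mem b w.2
  rw [hψ _ hbw]
  congr 1
  have : (⟨b • (w : N), hbw⟩ : ↥W) = b • w := rfl
  rw [this, map_smul]
  rfl

/-- Extension along a submodule inclusion into a finitely generated projective
module over a Frobenius algebra. -/
lemma extend_to_proj [FiniteDimensional k Λ]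
    (frob : ∃ e : (Λ →ₗ[k] k) ≃ₗ[k] Λ,
      ∀ (f : Λ →ₗ[k] k) (a : Λ), e (f ∘ₗ LinearMap.mulLeft k a) = e f * a)
    {N : Type} [AddCommGroup N] [Module k N] [Module Λ N] [IsScalarTower k Λ N]
    (W : Submodule Λ N)
    {X : Type} [AddCommGroup X] [Module Λ X] [Module.Finite Λ X]
    (hX : Module.Projective Λ X) (f : ↥W →ₗ[Λ] X) :
    ∃ F : N →ₗ[Λ] X, ∀ w : W, F ↑w = f w := by
  obtain ⟨ε, hbij⟩ := exists_pairing frob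
  obtain ⟨n, p, hp⟩ := Module.Finite.exists_fin' Λ X
  haveI := hX
  obtain ⟨s, hs⟩ := Module.projective_lifting_property p LinearMap.id hp
  choose G hG using fun i : Fin n =>
    extend_to_ring hbij W ((LinearMap.proj i) ∘ₗ s ∘ₗ f)
  refine ⟨p ∘ₗ LinearMap.pi G, fun w => ?_⟩
  have h1 : (LinearMap.pi G) (w : N) = s (f w) := by
    ext i
    have := hG i w
    simpa using this
  have h2 : p (s (f w)) = f w := by
    have := LinearMap.ext_iff.mp hs (f w)
    simpa using this
  rw [LinearMap.comp_apply, h1, h2]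

/-- Descend a map killing `ker π` through the surjection `π`. -/
lemma exists_descend {P V X : Type} [AddCommGroup P] [Module Λ P]
    [AddCommGroup V] [Module Λ V] [AddCommGroup X] [Module Λ X]
    (π : P →ₗ[Λ] V) (hsurj : Function.Surjective π) (T : P →ₗ[Λ] X)
    (hT : LinearMap.ker π ≤ LinearMap.ker T) :
    ∃ T' : V →ₗ[Λ] X, ∀ x : P, T' (π x) = T x := by
  refine ⟨(LinearMap.ker π).liftQ T hT ∘ₗ
    (π.quotKerEquivOfSurjective hsurj).symm.toLinearMap, fun x => ?_⟩
  have h1 : (π.quotKerEquivOfSurjective hsurj) (Submodule.Quotient.mk x) = π x := rfl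
  rw [LinearMap.comp_apply, LinearEquiv.coe_coe, ← h1, LinearEquiv.symm_apply_apply,
    Submodule.liftQ_apply]

end Aux

/-- Let `Λ` be a finite dimensional Frobenius `k`-algebra (encoded by a
right-`Λ`-linear isomorphism `Hom_k(Λ, k) ≅ Λ`) and `V` a finitely generated `Λ`-module
with stable endomorphism ring isomorphic to `k`.  If `π : P → V` is a projective cover
(a surjection from a finitely generated projective module with superfluous kernel), then
the first syzygy `ΩV = ker π` also has stable endomorphism ring isomorphic to `k`. -/
theorem stableEnd_syzygy (k Λ V P : Type) [Field k] [Ring Λ] [Algebra k Λ]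
    [FiniteDimensional k Λ]
    (frob : ∃ e : (Λ →ₗ[k] k) ≃ₗ[k] Λ,
      ∀ (f : Λ →ₗ[k] k) (a : Λ), e (f ∘ₗ LinearMap.mulLeft k a) = e f * a)
    [AddCommGroup V] [Module k V] [Module Λ V] [IsScalarTower k Λ V] [Module.Finite Λ V]
    [AddCommGroup P] [Module k P] [Module Λ P] [IsScalarTower k Λ P] [Module.Finite Λ P]
    (hproj : Module.Projective Λ P)
    (π : P →ₗ[Λ] V) (hsurj : Function.Surjective π)
    (hcover : ∀ N : Submodule Λ P, N ⊔ LinearMap.ker π = ⊤ → N = ⊤)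
    (hV : StableEndIsK k Λ V) :
    StableEndIsK k Λ ↥(LinearMap.ker π) := by
  classical
  set W := LinearMap.ker π with hW
  constructor
  · -- every stable endomorphism of ΩV is a scalar mod projectives
    intro f
    obtain ⟨F, hF⟩ := extend_to_proj frob W hproj (W.subtype ∘ₗ f)
    have hker : W ≤ LinearMap.ker (π ∘ₗ F) := by
      intro x hx
      rw [LinearMap.mem_ker, LinearMap.comp_apply]
      have hFx : F x = ↑(f ⟨x, hx⟩) := hF ⟨x, hx⟩
      rw [hFx]
      exact (f ⟨x, hx⟩).2
    obtain ⟨fbar, hfbar⟩ := exists_descend π hsurj (π ∘ₗ F) hker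
    obtain ⟨c, g, hg, ⟨fac⟩⟩ := hV.1 fbar
    letI := fac.acg; letI := fac.mod; haveI := fac.proj
    obtain ⟨h', hh'⟩ := Module.projective_lifting_property π fac.h hsurj
    set G := h' ∘ₗ fac.g ∘ₗ π with hG
    let F' : P →ₗ[Λ] P :=
      { toFun := fun x => F x - c • x - G x
        map_add' := by intro x y; simp only [map_add, smul_add]; abel
        map_smul' := by
          intro a x
          simp only [map_smul, RingHom.id_apply, smul_sub]
          rw [ksmul_comm' c a x] }
    have hF'apply : ∀ x, F' x = F x - c • x - G x := fun _ => rfl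
    have hπF' : ∀ x, π (F' x) = 0 := by
      intro x
      have h1 : π (F x) = fbar (π x) := by
        have := hfbar x
        rw [LinearMap.comp_apply] at this
        exact this.symm
      have h2 : π (G x) = g (π x) := by
        rw [hG]
        simp only [LinearMap.comp_apply]
        have e1 : π (h' (fac.g (π x))) = fac.h (fac.g (π x)) := by
          have := LinearMap.ext_iff.mp hh' (fac.g (π x))
          simpa using this
        have e2 : fac.h (fac.g (π x)) = g (π x) := by
          have := LinearMap.ext_iff.mp fac.fact (π x)
          simpa using this
        rw [e1, e2]
      have h3 : π (c • x) = c • π x := by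
        rw [← IsScalarTower.algebraMap_smul (A := Λ) c x, map_smul,
          IsScalarTower.algebraMap_smul]
      rw [hF'apply, map_sub, map_sub, h1, h2, h3, hg (π x)]
      abel
    let F'c : P →ₗ[Λ] ↥W := F'.codRestrict W (fun x => by
      rw [hW, LinearMap.mem_ker]; exact hπF' x)
    refine ⟨c, F'c ∘ₗ W.subtype, fun x => ?_, ⟨⟨P, hproj, W.subtype, F'c, rfl⟩⟩⟩
    apply Subtype.ext
    have hcoe : ((F'c ∘ₗ W.subtype) x : P) = F' ↑x := rfl
    rw [hcoe, hF'apply]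
    have hGx : G ↑x = 0 := by
      rw [hG]
      simp only [LinearMap.comp_apply]
      have : π (x : P) = 0 := x.2
      rw [this, map_zero, map_zero]
    have hFx : F ↑x = ↑(f x) := hF x
    rw [hGx, hFx, sub_zero]
    have : ((f x - c • x : ↥W) : P) = ↑(f x) - c • (x : P) := by
      rw [AddSubgroupClass.coe_sub]
      congr 1
    rw [this]
  · -- the identity of ΩV does not factor through a projective
    rintro ⟨fac⟩
    letI := fac.acg; letI := fac.mod; haveI := fac.proj
    have hWproj : Module.Projective Λ ↥W :=
      Module.Projective.of_split fac.g fac.h fac.fact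
    haveI : Module.Finite k P := Module.Finite.trans Λ P
    haveI : IsNoetherian k P := isNoetherian_of_isNoetherianRing_of_finite k P
    haveI : IsNoetherian Λ P := isNoetherian_of_tower k inferInstance
    haveI : Module.Finite Λ ↥W := Module.Finite.iff_fg.mpr (IsNoetherian.noetherian W)
    obtain ⟨r, hr⟩ := extend_to_proj frob W hWproj (LinearMap.id : ↥W →ₗ[Λ] ↥W)
    set smap : P →ₗ[Λ] P := LinearMap.id - W.subtype ∘ₗ r with hsmap
    have hkers : LinearMap.ker π ≤ LinearMap.ker smap := by
      intro x hx
      rw [LinearMap.mem_ker, hsmap]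
      simp only [LinearMap.sub_apply, LinearMap.id_apply, LinearMap.comp_apply]
      have : r x = ⟨x, hx⟩ := by
        have := hr ⟨x, hx⟩
        simpa using this
      rw [this]
      simp
    obtain ⟨s', hs'⟩ := exists_descend π hsurj smap hkers
    apply hV.2
    refine ⟨⟨P, hproj, s', π, ?_⟩⟩
    apply LinearMap.ext
    intro v
    obtain ⟨x, rfl⟩ := hsurj v
    rw [LinearMap.comp_apply, hs' x, hsmap]
    simp only [LinearMap.sub_apply, LinearMap.id_apply, LinearMap.comp_apply, map_sub,
      LinearMap.id_apply]
    have h0 : π (W.subtype (r x)) = 0 := LinearMap.mem_ker.mp (r x).2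
    rw [h0, sub_zero]
end

section
/- With Λ = kQ/I_{(r_0,r_1,r_2,k)} as above, Λ is a symmetric algebra: there exists a non-degenerate associative bilinear form θ : Λ × Λ → k with θ(a,b) = θ(b,a) for all a,b ∈ Λ. -/
/-- Generators of the path algebra of the quiver `Q`: vertex idempotents `e i`,
loops `z i` (the `ζ_i`) and arrows `t i : i → i+1` (the `τ_i`), for `i : ZMod 3`. -/
inductive QGen : Type
  | e : ZMod 3 → QGen
  | z : ZMod 3 → QGen
  | t : ZMod 3 → QGen

variable (k : Type) [Field k]

/-- The generator `e_i` inside the free algebra. -/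
noncomputable def Ee (i : ZMod 3) : FreeAlgebra k QGen := FreeAlgebra.ι k (QGen.e i)
/-- The generator `ζ_i` inside the free algebra. -/
noncomputable def Zz (i : ZMod 3) : FreeAlgebra k QGen := FreeAlgebra.ι k (QGen.z i)
/-- The generator `τ_i` inside the free algebra. -/
noncomputable def Tt (i : ZMod 3) : FreeAlgebra k QGen := FreeAlgebra.ι k (QGen.t i)

/-- The relations presenting `Λ = kQ/I_{(r₀,r₁,r₂,κ)}`: the path-algebra relations on
the idempotents and arrows of `Q` together with the relations
`τ_i ζ_i = 0`, `ζ_{i+1} τ_i = 0` and `ζ_i^{r_i} = (τ_{i+2} τ_{i+1} τ_i)^κ`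
(products composed right-to-left). -/
inductive QRel (r : ZMod 3 → ℕ) (κ : ℕ) : FreeAlgebra k QGen → FreeAlgebra k QGen → Prop
  | idem (i : ZMod 3) : QRel r κ (Ee k i * Ee k i) (Ee k i)
  | orth (i j : ZMod 3) : i ≠ j → QRel r κ (Ee k i * Ee k j) 0
  | sum_idem : QRel r κ (Ee k 0 + Ee k 1 + Ee k 2) 1
  | ez (i : ZMod 3) : QRel r κ (Ee k i * Zz k i) (Zz k i)
  | ze (i : ZMod 3) : QRel r κ (Zz k i * Ee k i) (Zz k i)
  | et (i : ZMod 3) : QRel r κ (Ee k (i + 1) * Tt k i) (Tt k i)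
  | te (i : ZMod 3) : QRel r κ (Tt k i * Ee k i) (Tt k i)
  | tz (i : ZMod 3) : QRel r κ (Tt k i * Zz k i) 0
  | zt (i : ZMod 3) : QRel r κ (Zz k (i + 1) * Tt k i) 0
  | cyc (i : ZMod 3) :
      QRel r κ (Zz k i ^ r i) ((Tt k (i + 2) * Tt k (i + 1) * Tt k i) ^ κ)

/-- The algebra `Λ_{(r₀,r₁,r₂,κ)} = kQ/I_{(r₀,r₁,r₂,κ)}`. -/
noncomputable abbrev Lam (r : ZMod 3 → ℕ) (κ : ℕ) : Type := RingQuot (QRel k r κ)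

/-- The image of `e_i` in `Λ`. -/
noncomputable def eL (r : ZMod 3 → ℕ) (κ : ℕ) (i : ZMod 3) : Lam k r κ :=
  RingQuot.mkAlgHom k (QRel k r κ) (Ee k i)
/-- The image of `ζ_i` in `Λ`. -/
noncomputable def zL (r : ZMod 3 → ℕ) (κ : ℕ) (i : ZMod 3) : Lam k r κ :=
  RingQuot.mkAlgHom k (QRel k r κ) (Zz k i)
/-- The image of `τ_i` in `Λ`. -/
noncomputable def tL (r : ZMod 3 → ℕ) (κ : ℕ) (i : ZMod 3) : Lam k r κ :=
  RingQuot.mkAlgHom k (QRel k r κ) (Tt k i)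

/-- `M` is (isomorphic to) the simple `Λ`-module `S_i` at vertex `i`: it is
one-dimensional over `k`, the idempotent `e_i` acts as the identity and all
arrows act as zero. -/
def IsSimpleAt (r : ZMod 3 → ℕ) (κ : ℕ) (i : ZMod 3) (M : Type) [AddCommGroup M]
    [Module k M] [Module (Lam k r κ) M] [IsScalarTower k (Lam k r κ) M] : Prop :=
  Module.finrank k M = 1 ∧ (∀ x : M, eL k r κ i • x = x) ∧
    (∀ (j : ZMod 3) (x : M), zL k r κ j • x = 0) ∧
    (∀ (j : ZMod 3) (x : M), tL k r κ j • x = 0)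



noncomputable section
namespace SymAux

/-- Basis index: `(j, .inl m)` is `ζ_j^m e_j` (with `m = 0` giving `e_j` and
`m = r j` the socle element `ω_j`); `(j, .inr l)` is the `τ`-path of length `l`
starting at `j` (`1 ≤ l ≤ 3κ-1`). -/
abbrev PB : Type := ZMod 3 × (ℕ ⊕ ℕ)

variable (r : ZMod 3 → ℕ) (κ : ℕ)

def pbValid : PB → Prop
  | (j, .inl m) => m ≤ r j
  | (_, .inr l) => 1 ≤ l ∧ l + 1 ≤ 3 * κ

def tgt : PB → ZMod 3
  | (j, .inl _) => j
  | (j, .inr l) => j + (l : ZMod 3)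

abbrev VV := PB →₀ k

def eAct (i : ZMod 3) : PB → VV k := fun b => if tgt b = i then Finsupp.single b 1 else 0

def zAct (i : ZMod 3) : PB → VV k
  | (j, .inl m) => if j = i ∧ m + 1 ≤ r j then Finsupp.single (j, .inl (m+1)) 1 else 0
  | (_, .inr _) => 0

def tAct (i : ZMod 3) : PB → VV k
  | (j, .inl m) => if j = i ∧ m = 0 then Finsupp.single (j, .inr 1) 1 else 0
  | (j, .inr l) => if j + (l : ZMod 3) = i ∧ 1 ≤ l then
      (if l + 1 < 3*κ then Finsupp.single (j, .inr (l+1)) 1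
       else if l + 1 = 3*κ then Finsupp.single (j, .inl (r j)) 1 else 0)
    else 0

def eE (i : ZMod 3) : Module.End k (VV k) := Finsupp.linearCombination k (eAct k i)
def zE (i : ZMod 3) : Module.End k (VV k) := Finsupp.linearCombination k (zAct k r i)
def tE (i : ZMod 3) : Module.End k (VV k) := Finsupp.linearCombination k (tAct k r κ i)

variable {k r κ}

lemma smul_single' (c : k) (b : PB) : c • (Finsupp.single b (1:k)) = Finsupp.single b c := by
  rw [Finsupp.smul_single, smul_eq_mul, mul_one]

lemma eE_single (i : ZMod 3) (b : PB) (c : k) :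
    eE k i (Finsupp.single b c) = if tgt b = i then Finsupp.single b c else 0 := by
  rw [eE, Finsupp.linearCombination_single, eAct]
  split_ifs <;> simp [smul_single']

lemma zE_single_inl (i j : ZMod 3) (m : ℕ) (c : k) :
    zE k r i (Finsupp.single (j, .inl m) c) =
      if j = i ∧ m + 1 ≤ r j then Finsupp.single (j, .inl (m+1)) c else 0 := by
  rw [zE, Finsupp.linearCombination_single]
  show c • zAct k r i (j, .inl m) = _
  rw [zAct]; split_ifs <;> simp [smul_single']

lemma zE_single_inr (i j : ZMod 3) (l : ℕ) (c : k) :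
    zE k r i (Finsupp.single (j, .inr l) c) = 0 := by
  rw [zE, Finsupp.linearCombination_single]
  show c • zAct k r i (j, .inr l) = _
  rw [zAct]; simp

lemma tE_single_inl (i j : ZMod 3) (m : ℕ) (c : k) :
    tE k r κ i (Finsupp.single (j, .inl m) c) =
      if j = i ∧ m = 0 then Finsupp.single (j, .inr 1) c else 0 := by
  rw [tE, Finsupp.linearCombination_single]
  show c • tAct k r κ i (j, .inl m) = _
  rw [tAct]; split_ifs <;> simp [smul_single']

lemma tE_single_inr (i j : ZMod 3) (l : ℕ) (c : k) :
    tE k r κ i (Finsupp.single (j, .inr l) c) =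
      if j + (l : ZMod 3) = i ∧ 1 ≤ l then
        (if l + 1 < 3*κ then Finsupp.single (j, .inr (l+1)) c
         else if l + 1 = 3*κ then Finsupp.single (j, .inl (r j)) c else 0)
      else 0 := by
  rw [tE, Finsupp.linearCombination_single]
  show c • tAct k r κ i (j, .inr l) = _
  rw [tAct]; split_ifs <;> simp [smul_single']


lemma zmod3_cases (x : ZMod 3) : x = 0 ∨ x = 1 ∨ x = 2 := by revert x; decide

lemma cast3 : ((3 : ℕ) : ZMod 3) = 0 := by decide
lemma cast3n (n : ℕ) : ((3 * n : ℕ) : ZMod 3) = 0 := by rw [Nat.cast_mul, cast3, zero_mul]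

lemma rel_idem (i : ZMod 3) : eE k i * eE k i = eE k i := by
  apply Finsupp.lhom_ext; intro b c
  rw [Module.End.mul_apply, eE_single]
  split_ifs with h
  · rw [eE_single, if_pos h]
  · simp

lemma rel_orth (i j : ZMod 3) (h : i ≠ j) : eE k i * eE k j = 0 := by
  apply Finsupp.lhom_ext; intro b c
  rw [Module.End.mul_apply, eE_single]
  split_ifs with h1
  · rw [eE_single, if_neg (by rw [h1]; exact fun hh => h hh.symm)]; simp
  · simp

lemma rel_sum : eE k 0 + eE k 1 + eE k 2 = (1 : Module.End k (VV k)) := by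
  apply Finsupp.lhom_ext; intro b c
  simp only [LinearMap.add_apply, Module.End.one_apply, eE_single]
  rcases zmod3_cases (tgt b) with h | h | h <;> rw [h]
  · rw [if_pos rfl, if_neg (by decide), if_neg (by decide)]; simp
  · rw [if_neg (by decide), if_pos rfl, if_neg (by decide)]; simp
  · rw [if_neg (by decide), if_neg (by decide), if_pos rfl]; simp

lemma rel_ez (i : ZMod 3) : eE k i * zE k r i = zE k r i := by
  apply Finsupp.lhom_ext; intro b c
  rw [Module.End.mul_apply]
  obtain ⟨j, m | l⟩ := b
  · rw [zE_single_inl]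
    split_ifs with h
    · rw [eE_single, if_pos (by simp [tgt, h.1])]
    · simp
  · rw [zE_single_inr]; simp [zE_single_inr]

lemma rel_ze (i : ZMod 3) : zE k r i * eE k i = zE k r i := by
  apply Finsupp.lhom_ext; intro b c
  rw [Module.End.mul_apply, eE_single]
  obtain ⟨j, m | l⟩ := b
  · split_ifs with h
    · rfl
    · rw [zE_single_inl, if_neg, map_zero]
      rintro ⟨rfl, -⟩; exact h rfl
  · split_ifs <;> simp [zE_single_inr]

lemma rel_et (i : ZMod 3) : eE k (i+1) * tE k r κ i = tE k r κ i := by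
  apply Finsupp.lhom_ext; intro b c
  rw [Module.End.mul_apply]
  obtain ⟨j, m | l⟩ := b
  · rw [tE_single_inl]
    split_ifs with h
    · rw [eE_single, if_pos (by simp [tgt, h.1])]
    · simp
  · rw [tE_single_inr]
    split_ifs with h1 h2 h3
    · rw [eE_single, if_pos]
      show (j : ZMod 3) + ((l:ℕ)+1 : ℕ) = i + 1
      push_cast
      rw [← add_assoc, h1.1]
    · rw [eE_single, if_pos]
      show (j : ZMod 3) = i + 1
      have h4 := congrArg (fun n : ℕ => (n : ZMod 3)) h3
      push_cast at h4
      have h5 : (l : ZMod 3) + 1 = 0 := by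
        rw [h4, show (3:ZMod 3) = 0 from by decide, zero_mul]
      show (j : ZMod 3) = i + 1
      rw [← h1.1, add_assoc, h5, add_zero]
    · simp
    · simp

lemma rel_te (i : ZMod 3) : tE k r κ i * eE k i = tE k r κ i := by
  apply Finsupp.lhom_ext; intro b c
  rw [Module.End.mul_apply, eE_single]
  obtain ⟨j, m | l⟩ := b
  · split_ifs with h
    · rfl
    · rw [tE_single_inl, if_neg, map_zero]
      rintro ⟨rfl, -⟩; exact h rfl
  · split_ifs with h
    · rfl
    · rw [tE_single_inr, if_neg, map_zero]
      rintro ⟨h1, -⟩; exact h h1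

lemma rel_tz (i : ZMod 3) : tE k r κ i * zE k r i = 0 := by
  apply Finsupp.lhom_ext; intro b c
  rw [Module.End.mul_apply]
  obtain ⟨j, m | l⟩ := b
  · rw [zE_single_inl]
    split_ifs with h
    · rw [tE_single_inl, if_neg (by rintro ⟨-, hh⟩; omega)]; rfl
    · simp
  · rw [zE_single_inr]; simp

lemma rel_zt (i : ZMod 3) : zE k r (i+1) * tE k r κ i = 0 := by
  apply Finsupp.lhom_ext; intro b c
  rw [Module.End.mul_apply]
  obtain ⟨j, m | l⟩ := b
  · rw [tE_single_inl]
    split_ifs with h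
    · rw [zE_single_inr]; rfl
    · simp
  · rw [tE_single_inr]
    split_ifs with h1 h2 h3
    · rw [zE_single_inr]; rfl
    · rw [zE_single_inl, if_neg (by rintro ⟨-, hh⟩; omega)]; rfl
    · simp
    · simp


variable (k r κ) in
def tch : ℕ → ZMod 3 → Module.End k (VV k)
  | 0, _ => 1
  | (n+1), i => tch n (i+1) * tE k r κ i

lemma tch_zero (i : ZMod 3) : tch k r κ 0 i = 1 := rfl
lemma tch_succ (n : ℕ) (i : ZMod 3) :
    tch k r κ (n+1) i = tch k r κ n (i+1) * tE k r κ i := rfl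

lemma tch_add (n : ℕ) : ∀ (m : ℕ) (i : ZMod 3),
    tch k r κ (m + n) i = tch k r κ n (i + (m:ZMod 3)) * tch k r κ m i := by
  intro m
  induction m with
  | zero => intro i; simp [tch_zero, Nat.zero_add]
  | succ m ih =>
    intro i
    have h1 : m + 1 + n = (m + n) + 1 := by omega
    rw [h1, tch_succ, ih (i+1), tch_succ, mul_assoc]
    congr 2
    push_cast; ring

lemma tch_one (i : ZMod 3) : tch k r κ 1 i = tE k r κ i := by
  rw [tch_succ, tch_zero, one_mul]

lemma tch_three (i : ZMod 3) :
    tch k r κ 3 i = tE k r κ (i+2) * tE k r κ (i+1) * tE k r κ i := by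
  show tch k r κ (2+1) i = _
  rw [tch_succ, show (2:ℕ) = 1+1 from rfl, tch_succ, tch_one]
  congr 2
  rw [add_assoc]; norm_num

lemma cyc_pow_tch (i : ZMod 3) (n : ℕ) :
    (tE k r κ (i+2) * tE k r κ (i+1) * tE k r κ i)^n = tch k r κ (3*n) i := by
  induction n with
  | zero => simp [tch_zero]
  | succ n ih =>
    rw [pow_succ', ih, show 3*(n+1) = 3*n + 3 from by omega, tch_add,
      cast3n, add_zero, tch_three]

lemma tch_inl_dead (n : ℕ) (i j : ZMod 3) (m : ℕ) (c : k) (hm : 1 ≤ m) (hn : 1 ≤ n) :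
    tch k r κ n i (Finsupp.single (j, .inl m) c) = 0 := by
  obtain ⟨t, rfl⟩ : ∃ t, n = t + 1 := ⟨n - 1, by omega⟩
  rw [tch_succ, Module.End.mul_apply, tE_single_inl, if_neg (by rintro ⟨-, h⟩; omega),
    map_zero]

lemma trun (hr : ∀ i, 1 ≤ r i) : ∀ (n : ℕ) (j : ZMod 3) (l : ℕ) (c : k),
    1 ≤ l → l < 3*κ →
    tch k r κ n (j + (l : ZMod 3)) (Finsupp.single (j, .inr l) c) =
      if l + n < 3*κ then Finsupp.single (j, .inr (l+n)) c
      else if l + n = 3*κ then Finsupp.single (j, .inl (r j)) c else 0 := by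
  intro n
  induction n with
  | zero =>
    intro j l c h1 h2
    rw [tch_zero, if_pos (by omega)]
    simp
  | succ n ih =>
    intro j l c h1 h2
    rw [tch_succ, Module.End.mul_apply, tE_single_inr, if_pos ⟨rfl, h1⟩]
    by_cases h3 : l + 1 < 3*κ
    · rw [if_pos h3]
      have hv : (j + ((l+1:ℕ) : ZMod 3) : ZMod 3) = j + (l:ZMod 3) + 1 := by push_cast; ring
      have := ih j (l+1) c (by omega) h3
      rw [hv] at this
      rw [this]
      have e1 : l + 1 + n = l + (n+1) := by omega
      rw [e1]
    · rw [if_neg h3]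
      by_cases h4 : l + 1 = 3*κ
      · rw [if_pos h4]
        rcases Nat.eq_zero_or_pos n with hn | hn
        · subst hn
          rw [tch_zero]
          have : ¬ (l + 1 < 3*κ) := h3
          rw [if_neg (by omega), if_pos (by omega)]
          rfl
        · rw [tch_inl_dead _ _ _ _ _ (hr j) hn, if_neg (by omega), if_neg (by omega)]
      · rw [if_neg h4, map_zero, if_neg (by omega), if_neg (by omega)]

lemma tch_e (hr : ∀ i, 1 ≤ r i) (hκ : 1 ≤ κ) (n : ℕ) (i : ZMod 3) (c : k) (hn : 1 ≤ n) :
    tch k r κ n i (Finsupp.single (i, .inl 0) c) =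
      if n < 3*κ then Finsupp.single (i, .inr n) c
      else if n = 3*κ then Finsupp.single (i, .inl (r i)) c else 0 := by
  obtain ⟨t, rfl⟩ : ∃ t, n = t + 1 := ⟨n - 1, by omega⟩
  rw [tch_succ, Module.End.mul_apply, tE_single_inl, if_pos ⟨rfl, rfl⟩]
  have hv : (i + ((1:ℕ) : ZMod 3) : ZMod 3) = i + 1 := by push_cast; ring
  have := trun (κ := κ) hr t i 1 c (le_refl 1) (by omega)
  rw [hv] at this
  rw [this]
  have e1 : 1 + t = t + 1 := by omega
  rw [e1]

lemma tch_e_ne (n : ℕ) (i i' : ZMod 3) (c : k) (hn : 1 ≤ n) (hne : i' ≠ i) :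
    tch k r κ n i (Finsupp.single (i', .inl 0) c) = 0 := by
  obtain ⟨t, rfl⟩ : ∃ t, n = t + 1 := ⟨n - 1, by omega⟩
  rw [tch_succ, Module.End.mul_apply, tE_single_inl, if_neg (by rintro ⟨h, -⟩; exact hne h),
    map_zero]

lemma zE_pow_inl (i : ZMod 3) : ∀ (s : ℕ) (j : ZMod 3) (m : ℕ) (c : k),
    (zE k r i ^ (s+1)) (Finsupp.single (j, .inl m) c) =
      if j = i ∧ m + (s+1) ≤ r j then Finsupp.single (j, .inl (m+(s+1))) c else 0 := by
  intro s
  induction s with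
  | zero => intro j m c; rw [pow_one, zE_single_inl]
  | succ s ih =>
    intro j m c
    rw [pow_succ, Module.End.mul_apply, zE_single_inl]
    by_cases h : j = i ∧ m + 1 ≤ r j
    · rw [if_pos h, ih j (m+1) c]
      by_cases h2 : m + 1 + (s+1) ≤ r j
      · have e1 : m + 1 + (s+1) = m + (s+1+1) := by omega
        rw [if_pos ⟨h.1, h2⟩, e1, if_pos ⟨h.1, by omega⟩]
      · rw [if_neg (by rintro ⟨-, hh⟩; exact h2 (by omega)),
          if_neg (by rintro ⟨-, hh⟩; exact h2 (by omega))]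
    · rw [if_neg h, map_zero, if_neg (by rintro ⟨hj, hh⟩; exact h ⟨hj, by omega⟩)]

lemma zE_pow_inr (i : ZMod 3) (s : ℕ) (j : ZMod 3) (l : ℕ) (c : k) (hs : 1 ≤ s) :
    (zE k r i ^ s) (Finsupp.single (j, .inr l) c) = 0 := by
  obtain ⟨t, rfl⟩ : ∃ t, s = t + 1 := ⟨s - 1, by omega⟩
  rw [pow_succ, Module.End.mul_apply, zE_single_inr, map_zero]

lemma rel_cyc (hr : ∀ i, 1 ≤ r i) (hκ : 1 ≤ κ) (i : ZMod 3) :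
    zE k r i ^ (r i) = (tE k r κ (i+2) * tE k r κ (i+1) * tE k r κ i)^κ := by
  rw [cyc_pow_tch]
  apply Finsupp.lhom_ext; intro b c
  obtain ⟨j, m | l⟩ := b
  · obtain ⟨s, hs⟩ : ∃ s, r i = s + 1 := ⟨r i - 1, by have := hr i; omega⟩
    rw [hs, zE_pow_inl]
    by_cases hj : j = i
    · subst hj
      rcases Nat.eq_zero_or_pos m with hm | hm
      · subst hm
        rw [if_pos ⟨rfl, by omega⟩, tch_e hr hκ (3*κ) j c (by omega), if_neg (by omega),
          if_pos rfl, zero_add, hs]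
      · rw [if_neg (by rintro ⟨-, hh⟩; rw [hs] at hh; omega),
          tch_inl_dead _ _ _ _ _ hm (by omega)]
    · rw [if_neg (by rintro ⟨hh, -⟩; exact hj hh)]
      rcases Nat.eq_zero_or_pos m with hm | hm
      · subst hm; rw [tch_e_ne _ _ _ _ (by omega) hj]
      · rw [tch_inl_dead _ _ _ _ _ hm (by omega)]
  · rw [zE_pow_inr _ _ _ _ _ (hr i)]
    obtain ⟨t, ht⟩ : ∃ t, 3*κ = t + 1 := ⟨3*κ - 1, by omega⟩
    rw [ht, tch_succ, Module.End.mul_apply, tE_single_inr]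
    by_cases h1 : j + (l : ZMod 3) = i ∧ 1 ≤ l
    · rw [if_pos h1]
      by_cases h2 : l + 1 < 3*κ
      · rw [if_pos h2]
        have hv : (j + ((l+1:ℕ) : ZMod 3) : ZMod 3) = i + 1 := by
          push_cast; rw [← h1.1]; ring
        have := trun (κ := κ) hr t j (l+1) c (by omega) h2
        rw [hv] at this
        rw [this, if_neg (by omega), if_neg (by omega)]
      · rw [if_neg h2]
        by_cases h3 : l + 1 = 3*κ
        · rw [if_pos h3, tch_inl_dead _ _ _ _ _ (hr j) (by omega)]
        · rw [if_neg h3, map_zero]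
    · rw [if_neg h1, map_zero]

end SymAux
end

noncomputable section
namespace SymAux
variable (r : ZMod 3 → ℕ) (κ : ℕ)


noncomputable def tpL (i : ZMod 3) : ℕ → Lam k r κ
  | 0 => eL k r κ i
  | (n+1) => tL k r κ (i + (n : ZMod 3)) * tpL i n

section LamSide
variable {k}
variable {r κ}

lemma Lrel {x y : FreeAlgebra k QGen} (h : QRel k r κ x y) :
    RingQuot.mkAlgHom k (QRel k r κ) x = RingQuot.mkAlgHom k (QRel k r κ) y :=
  RingQuot.mkAlgHom_rel k h

lemma Lee (i : ZMod 3) : eL k r κ i * eL k r κ i = eL k r κ i := by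
  have h := Lrel (QRel.idem (k := k) (r := r) (κ := κ) i); rw [map_mul] at h; exact h

lemma Lee0 {i j : ZMod 3} (h : i ≠ j) : eL k r κ i * eL k r κ j = 0 := by
  have h2 := Lrel (QRel.orth (k := k) (r := r) (κ := κ) i j h)
  rw [map_mul, map_zero] at h2; exact h2

lemma Lone : eL k r κ 0 + eL k r κ 1 + eL k r κ 2 = 1 := by
  have h := Lrel (QRel.sum_idem (k := k) (r := r) (κ := κ))
  rw [map_add, map_add, map_one] at h; exact h

lemma Lez (i : ZMod 3) : eL k r κ i * zL k r κ i = zL k r κ i := by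
  have h := Lrel (QRel.ez (k := k) (r := r) (κ := κ) i); rw [map_mul] at h; exact h

lemma Lze (i : ZMod 3) : zL k r κ i * eL k r κ i = zL k r κ i := by
  have h := Lrel (QRel.ze (k := k) (r := r) (κ := κ) i); rw [map_mul] at h; exact h

lemma Let (i : ZMod 3) : eL k r κ (i+1) * tL k r κ i = tL k r κ i := by
  have h := Lrel (QRel.et (k := k) (r := r) (κ := κ) i); rw [map_mul] at h; exact h

lemma Lte (i : ZMod 3) : tL k r κ i * eL k r κ i = tL k r κ i := by
  have h := Lrel (QRel.te (k := k) (r := r) (κ := κ) i); rw [map_mul] at h; exact h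

lemma Ltz (i : ZMod 3) : tL k r κ i * zL k r κ i = 0 := by
  have h := Lrel (QRel.tz (k := k) (r := r) (κ := κ) i)
  rw [map_mul, map_zero] at h; exact h

lemma Lzt (i : ZMod 3) : zL k r κ (i+1) * tL k r κ i = 0 := by
  have h := Lrel (QRel.zt (k := k) (r := r) (κ := κ) i)
  rw [map_mul, map_zero] at h; exact h

lemma Lcyc (i : ZMod 3) :
    zL k r κ i ^ (r i) = (tL k r κ (i+2) * tL k r κ (i+1) * tL k r κ i) ^ κ := by
  have h := Lrel (QRel.cyc (k := k) (r := r) (κ := κ) i)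
  rw [map_pow, map_pow, map_mul, map_mul] at h; exact h

lemma Lez0 {i j : ZMod 3} (h : j ≠ i) : eL k r κ j * zL k r κ i = 0 := by
  rw [← Lez, ← mul_assoc, Lee0 h, zero_mul]

lemma Lze0 {i j : ZMod 3} (h : i ≠ j) : zL k r κ i * eL k r κ j = 0 := by
  rw [← Lze, mul_assoc, Lee0 h, mul_zero]

lemma Let0 {i j : ZMod 3} (h : j ≠ i + 1) : eL k r κ j * tL k r κ i = 0 := by
  rw [← Let, ← mul_assoc, Lee0 h, zero_mul]

lemma Lte0 {i j : ZMod 3} (h : i ≠ j) : tL k r κ i * eL k r κ j = 0 := by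
  rw [← Lte, mul_assoc, Lee0 h, mul_zero]

lemma LtZ (i j : ZMod 3) : tL k r κ i * zL k r κ j = 0 := by
  by_cases h : i = j
  · subst h; exact Ltz i
  · rw [← Lez, ← mul_assoc, Lte0 h, zero_mul]

lemma LeZpow {j : ZMod 3} {b : ℕ} (hb : 1 ≤ b) :
    eL k r κ j * zL k r κ j ^ b = zL k r κ j ^ b := by
  obtain ⟨c, rfl⟩ : ∃ c, b = c + 1 := ⟨b - 1, by omega⟩
  rw [pow_succ', ← mul_assoc, Lez]

lemma LeZpow0 {i j : ZMod 3} {b : ℕ} (h : j ≠ i) (hb : 1 ≤ b) :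
    eL k r κ j * zL k r κ i ^ b = 0 := by
  obtain ⟨c, rfl⟩ : ∃ c, b = c + 1 := ⟨b - 1, by omega⟩
  rw [pow_succ', ← mul_assoc, Lez0 h, zero_mul]

lemma LzpowE {j : ZMod 3} {a : ℕ} (ha : 1 ≤ a) :
    zL k r κ j ^ a * eL k r κ j = zL k r κ j ^ a := by
  obtain ⟨c, rfl⟩ : ∃ c, a = c + 1 := ⟨a - 1, by omega⟩
  rw [pow_succ, mul_assoc, Lze]

lemma Lz_ttt (i : ZMod 3) :
    zL k r κ i * (tL k r κ (i+2) * tL k r κ (i+1) * tL k r κ i) = 0 := by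
  have h2 : zL k r κ i * tL k r κ (i+2) = 0 := by
    have h := Lzt (k := k) (r := r) (κ := κ) (i + 2)
    rwa [add_assoc, show ((2:ZMod 3) + 1) = 0 from by decide, add_zero] at h
  rw [mul_assoc (tL k r κ (i+2)), ← mul_assoc, h2, zero_mul]

lemma Lzpow_top (hκ : 1 ≤ κ) (i : ZMod 3) : zL k r κ i ^ (r i + 1) = 0 := by
  obtain ⟨c, hc⟩ : ∃ c, κ = c + 1 := ⟨κ - 1, by omega⟩
  rw [pow_succ', Lcyc, hc, pow_succ', ← mul_assoc, Lz_ttt, zero_mul]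

lemma Lzpow_big (hκ : 1 ≤ κ) {i : ZMod 3} {s : ℕ} (hs : r i < s) : zL k r κ i ^ s = 0 := by
  rw [show s = (r i + 1) + (s - (r i + 1)) from by omega, pow_add, Lzpow_top hκ, zero_mul]

lemma tpL_zero (i : ZMod 3) : tpL k r κ i 0 = eL k r κ i := rfl
lemma tpL_succ (i : ZMod 3) (n : ℕ) :
    tpL k r κ i (n+1) = tL k r κ (i + (n : ZMod 3)) * tpL k r κ i n := rfl

lemma LeTp (i : ZMod 3) : ∀ (l : ℕ) (j : ZMod 3),
    eL k r κ i * tpL k r κ j l =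
      if i = j + (l : ZMod 3) then tpL k r κ j l else 0 := by
  intro l
  induction l with
  | zero =>
    intro j
    rw [tpL_zero, Nat.cast_zero, add_zero]
    by_cases h : i = j
    · subst h; rw [if_pos rfl, Lee]
    · rw [if_neg h, Lee0 h]
  | succ l ih =>
    intro j
    rw [tpL_succ, ← mul_assoc]
    by_cases h : i = j + ((l+1 : ℕ) : ZMod 3)
    · rw [if_pos h]
      have h2 : i = (j + (l : ZMod 3)) + 1 := by rw [h]; push_cast; ring
      rw [h2, Let]
    · rw [if_neg h]
      have hne : i ≠ (j + (l:ZMod 3)) + 1 := by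
        intro hh; apply h; rw [hh]; push_cast; ring
      rw [Let0 hne, zero_mul]

lemma LtpE (i : ZMod 3) : ∀ (l : ℕ) (j : ZMod 3),
    tpL k r κ j l * eL k r κ i = if i = j then tpL k r κ j l else 0 := by
  intro l
  induction l with
  | zero =>
    intro j
    rw [tpL_zero]
    by_cases h : i = j
    · subst h; rw [if_pos rfl, Lee]
    · rw [if_neg h, Lee0 (fun hh => h hh.symm)]
  | succ l ih =>
    intro j
    rw [tpL_succ, mul_assoc, ih]
    by_cases h : i = j
    · simp only [if_pos h, tpL_succ]
    · rw [if_neg h, if_neg h, mul_zero]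

lemma LtpSplit : ∀ (n : ℕ) (j : ZMod 3),
    tpL k r κ j (n+1) = tpL k r κ (j+1) n * tL k r κ j := by
  intro n
  induction n with
  | zero =>
    intro j
    rw [tpL_succ, tpL_zero, tpL_zero, Nat.cast_zero, add_zero, Lte, Let]
  | succ n ih =>
    intro j
    rw [tpL_succ, ih, ← mul_assoc, tpL_succ (j+1) n]
    congr 3
    push_cast; ring

lemma LtpMul : ∀ (n : ℕ) (l : ℕ) (j : ZMod 3),
    tpL k r κ (j + (l : ZMod 3)) n * tpL k r κ j l = tpL k r κ j (l + n) := by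
  intro n
  induction n with
  | zero =>
    intro l j
    rw [tpL_zero, LeTp, if_pos rfl, add_zero]
  | succ n ih =>
    intro l j
    rw [tpL_succ, mul_assoc, ih, show l + (n+1) = (l+n) + 1 from by omega, tpL_succ]
    congr 2
    push_cast; ring

lemma Ltp_three (i : ZMod 3) :
    tpL k r κ i 3 = tL k r κ (i+2) * tL k r κ (i+1) * tL k r κ i := by
  show tpL k r κ i (2+1) = _
  rw [tpL_succ, show (2:ℕ) = 1 + 1 from rfl, tpL_succ, tpL_succ, tpL_zero,
    Nat.cast_zero, add_zero, Lte, Nat.cast_one, mul_assoc]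
  norm_num

lemma Ltp_pow : ∀ (n : ℕ), 1 ≤ n → ∀ (i : ZMod 3),
    tpL k r κ i (3*n) = (tL k r κ (i+2) * tL k r κ (i+1) * tL k r κ i) ^ n := by
  intro n
  induction n with
  | zero => omega
  | succ n ih =>
    intro _ i
    rcases Nat.eq_zero_or_pos n with hn | hn
    · subst hn; rw [pow_one]; exact Ltp_three i
    · rw [show 3*(n+1) = 3*n + 3 from by omega, ← LtpMul 3 (3*n) i, cast3n, add_zero,
        Ltp_three, ih hn, pow_succ']

lemma Ltp3κ (hκ : 1 ≤ κ) (i : ZMod 3) : tpL k r κ i (3*κ) = zL k r κ i ^ (r i) := by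
  rw [Ltp_pow κ hκ, Lcyc]

lemma Ltp_big (hr : ∀ i, 1 ≤ r i) (hκ : 1 ≤ κ) {i : ZMod 3} {s : ℕ} (hs : 3*κ < s) :
    tpL k r κ i s = 0 := by
  obtain ⟨d, hd, rfl⟩ : ∃ d, 1 ≤ d ∧ s = 3*κ + d := ⟨s - 3*κ, by omega, by omega⟩
  rw [← LtpMul d (3*κ) i, cast3n, add_zero, Ltp3κ hκ]
  obtain ⟨d', rfl⟩ : ∃ d', d = d' + 1 := ⟨d - 1, by omega⟩
  obtain ⟨c, hc⟩ : ∃ c, r i = c + 1 := ⟨r i - 1, by have := hr i; omega⟩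
  rw [LtpSplit, hc, pow_succ', mul_assoc, ← mul_assoc (tL k r κ i), Ltz, zero_mul,
    mul_zero]

end LamSide

def mulB : PB → PB → Option PB := fun p q => match p, q with
  | (j, .inl a), (j', .inl b) =>
      if j = j' ∧ a + b ≤ r j then some (j, .inl (a+b)) else none
  | (j, .inl a), (j', .inr l) =>
      if a = 0 ∧ j = j' + (l : ZMod 3) then some (j', .inr l) else none
  | (j, .inr l), (j', .inl b) =>
      if b = 0 ∧ j' = j then some (j, .inr l) else none
  | (j, .inr l), (j', .inr l') =>
      if j = j' + (l' : ZMod 3) then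
        (if l + l' < 3*κ then some (j', .inr (l + l'))
         else if l + l' = 3*κ then some (j', .inl (r j')) else none)
      else none

noncomputable def pML : PB → Lam k r κ
  | (j, .inl m) => zL k r κ j ^ m * eL k r κ j
  | (j, .inr l) => tpL k r κ j l

def omCoef : PB → k
  | (j, .inl m) => if m = r j then 1 else 0
  | (_, .inr _) => 0

def dualB : PB → PB
  | (j, .inl m) => (j, .inl (r j - m))
  | (j, .inr l) => (j + (l : ZMod 3), .inr (3*κ - l))

section MulTable
variable {k}
variable {r κ}

lemma mulB_valid {p q s : PB} (hp : pbValid r κ p) (hq : pbValid r κ q)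
    (hs : mulB r κ p q = some s) : pbValid r κ s := by
  obtain ⟨j, a | l⟩ := p <;> obtain ⟨j', b | l'⟩ := q <;>
    simp only [mulB, pbValid] at hp hq hs ⊢
  · split_ifs at hs with h
    cases hs; exact h.2
  · split_ifs at hs with h
    cases hs; exact hq
  · split_ifs at hs with h
    cases hs; exact hp
  · split_ifs at hs with h1 h2 h3
    · cases hs; constructor <;> omega
    · cases hs; simp only [pbValid]; omega

lemma mul_pML (hr : ∀ i, 1 ≤ r i) (hκ : 1 ≤ κ) {p q : PB}
    (hp : pbValid r κ p) (hq : pbValid r κ q) :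
    pML k r κ p * pML k r κ q = (mulB r κ p q).elim 0 (pML k r κ) := by
  obtain ⟨j, a | l⟩ := p <;> obtain ⟨j', b | l'⟩ := q
  · -- inl * inl
    show (zL k r κ j ^ a * eL k r κ j) * (zL k r κ j' ^ b * eL k r κ j') = _
    simp only [mulB]
    by_cases hj : j = j'
    · subst hj
      rcases Nat.eq_zero_or_pos b with hb | hb
      · subst hb
        rw [pow_zero, one_mul, mul_assoc, Lee, if_pos ⟨rfl, by exact hp⟩]
        rfl
      · have key : (zL k r κ j ^ a * eL k r κ j) * (zL k r κ j ^ b * eL k r κ j)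
            = zL k r κ j ^ (a+b) * eL k r κ j := by
          rw [mul_assoc, ← mul_assoc (eL k r κ j), LeZpow hb, ← mul_assoc, ← pow_add]
        rw [key]
        by_cases hab : a + b ≤ r j
        · rw [if_pos ⟨rfl, hab⟩]; rfl
        · rw [if_neg (by rintro ⟨-, hh⟩; exact hab hh), Lzpow_big hκ (by omega), zero_mul]
          rfl
    · rw [if_neg (by rintro ⟨hh, -⟩; exact hj hh)]
      rcases Nat.eq_zero_or_pos b with hb | hb
      · subst hb
        rw [pow_zero, one_mul, mul_assoc, Lee0 hj, mul_zero]; rfl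
      · rw [mul_assoc, ← mul_assoc (eL k r κ j), LeZpow0 hj hb, zero_mul, mul_zero]; rfl
  · -- inl * inr
    show (zL k r κ j ^ a * eL k r κ j) * tpL k r κ j' l' = _
    simp only [mulB]
    by_cases hj : j = j' + (l' : ZMod 3)
    · rcases Nat.eq_zero_or_pos a with ha | ha
      · subst ha
        rw [pow_zero, one_mul, LeTp, if_pos hj, if_pos ⟨rfl, hj⟩]; rfl
      · rw [if_neg (by rintro ⟨hh, -⟩; omega), mul_assoc, LeTp, if_pos hj]
        obtain ⟨l'', rfl⟩ : ∃ x, l' = x + 1 := ⟨l' - 1, by have := hq.1; omega⟩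
        obtain ⟨a', rfl⟩ : ∃ x, a = x + 1 := ⟨a - 1, by omega⟩
        have hj2 : j = (j' + (l'' : ZMod 3)) + 1 := by rw [hj]; push_cast; ring
        rw [tpL_succ, pow_succ, mul_assoc, ← mul_assoc (zL k r κ j), hj2, Lzt]
        simp
    · rw [if_neg (by rintro ⟨-, hh⟩; exact hj hh), mul_assoc, LeTp, if_neg hj, mul_zero]
      rfl
  · -- inr * inl
    show tpL k r κ j l * (zL k r κ j' ^ b * eL k r κ j') = _
    simp only [mulB]
    rcases Nat.eq_zero_or_pos b with hb | hb
    · subst hb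
      rw [pow_zero, one_mul, LtpE]
      by_cases hj : j' = j
      · rw [if_pos hj, if_pos ⟨rfl, hj⟩]; rfl
      · rw [if_neg hj, if_neg (by rintro ⟨-, hh⟩; exact hj hh)]; rfl
    · rw [if_neg (by rintro ⟨hh, -⟩; omega)]
      obtain ⟨l'', rfl⟩ : ∃ x, l = x + 1 := ⟨l - 1, by have := hp.1; omega⟩
      obtain ⟨b', rfl⟩ : ∃ x, b = x + 1 := ⟨b - 1, by omega⟩
      rw [LtpSplit, pow_succ', mul_assoc, ← mul_assoc (tL k r κ j), ← mul_assoc (tL k r κ j),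
        LtZ]
      simp
  · -- inr * inr
    show tpL k r κ j l * tpL k r κ j' l' = _
    simp only [mulB]
    by_cases hj : j = j' + (l' : ZMod 3)
    · rw [if_pos hj, hj, LtpMul]
      by_cases h1 : l + l' < 3*κ
      · rw [if_pos h1, show l' + l = l + l' from by omega]; rfl
      · rw [if_neg h1]
        by_cases h2 : l + l' = 3*κ
        · rw [if_pos h2, show l' + l = 3*κ from by omega, Ltp3κ hκ]
          show _ = zL k r κ j' ^ (r j') * eL k r κ j'
          rw [LzpowE (hr j')]
        · rw [if_neg h2, Ltp_big hr hκ (by omega)]; rfl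
    · have he : tpL k r κ j l * eL k r κ j = tpL k r κ j l := by rw [LtpE, if_pos rfl]
      rw [if_neg hj, ← he, mul_assoc, LeTp, if_neg hj, mul_zero]; rfl

end MulTable

def gAct : QGen → Module.End k (VV k)
  | .e i => eE k i
  | .z i => zE k r i
  | .t i => tE k r κ i

noncomputable def fEnd : FreeAlgebra k QGen →ₐ[k] Module.End k (VV k) :=
  FreeAlgebra.lift k (gAct k r κ)

section PhiSide
variable {k}
variable {r κ}

lemma fEnd_Ee (i : ZMod 3) : fEnd k r κ (Ee k i) = eE k i := by
  rw [Ee, fEnd, FreeAlgebra.lift_ι_apply]; rfl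

lemma fEnd_Zz (i : ZMod 3) : fEnd k r κ (Zz k i) = zE k r i := by
  rw [Zz, fEnd, FreeAlgebra.lift_ι_apply]; rfl

lemma fEnd_Tt (i : ZMod 3) : fEnd k r κ (Tt k i) = tE k r κ i := by
  rw [Tt, fEnd, FreeAlgebra.lift_ι_apply]; rfl

lemma fEnd_rel (hr : ∀ i, 1 ≤ r i) (hκ : 1 ≤ κ) :
    ∀ ⦃x y : FreeAlgebra k QGen⦄, QRel k r κ x y → fEnd k r κ x = fEnd k r κ y := by
  intro x y h
  cases h with
  | idem i => rw [map_mul, fEnd_Ee, rel_idem]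
  | orth i j hij => rw [map_mul, fEnd_Ee, fEnd_Ee, map_zero, rel_orth _ _ hij]
  | sum_idem => rw [map_add, map_add, map_one, fEnd_Ee, fEnd_Ee, fEnd_Ee, rel_sum]
  | ez i => rw [map_mul, fEnd_Ee, fEnd_Zz, rel_ez]
  | ze i => rw [map_mul, fEnd_Ee, fEnd_Zz, rel_ze]
  | et i => rw [map_mul, fEnd_Ee, fEnd_Tt, rel_et]
  | te i => rw [map_mul, fEnd_Ee, fEnd_Tt, rel_te]
  | tz i => rw [map_mul, fEnd_Tt, fEnd_Zz, map_zero, rel_tz]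
  | zt i => rw [map_mul, fEnd_Zz, fEnd_Tt, map_zero, rel_zt]
  | cyc i =>
      rw [map_pow, map_pow, map_mul, map_mul, fEnd_Zz, fEnd_Tt, fEnd_Tt, fEnd_Tt,
        rel_cyc hr hκ]

noncomputable def phi (hr : ∀ i, 1 ≤ r i) (hκ : 1 ≤ κ) :
    Lam k r κ →ₐ[k] Module.End k (VV k) :=
  RingQuot.liftAlgHom k ⟨fEnd k r κ, fEnd_rel hr hκ⟩

variable (hr : ∀ i, 1 ≤ r i) (hκ : 1 ≤ κ)

lemma phi_eL (i : ZMod 3) : phi hr hκ (eL k r κ i) = eE k i := by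
  rw [eL, phi, RingQuot.liftAlgHom_mkAlgHom_apply, fEnd_Ee]

lemma phi_zL (i : ZMod 3) : phi hr hκ (zL k r κ i) = zE k r i := by
  rw [zL, phi, RingQuot.liftAlgHom_mkAlgHom_apply, fEnd_Zz]

lemma phi_tL (i : ZMod 3) : phi hr hκ (tL k r κ i) = tE k r κ i := by
  rw [tL, phi, RingQuot.liftAlgHom_mkAlgHom_apply, fEnd_Tt]

lemma tch_succ2 (n : ℕ) (j : ZMod 3) :
    tch k r κ (n+1) j = tE k r κ (j + (n : ZMod 3)) * tch k r κ n j := by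
  rw [tch_add 1 n j, tch_one]

lemma phi_tpL (j : ZMod 3) (n : ℕ) :
    phi hr hκ (tpL k r κ j n) = tch k r κ n j * eE k j := by
  induction n with
  | zero => rw [tpL_zero, phi_eL, tch_zero, one_mul]
  | succ n ih =>
    rw [tpL_succ, map_mul, phi_tL, ih, tch_succ2, mul_assoc]

lemma phi_pML_single {b : PB} (hb : pbValid r κ b) (i0 : ZMod 3) :
    phi hr hκ (pML k r κ b) (Finsupp.single ((i0, Sum.inl 0) : PB) (1:k)) =
      if i0 = b.1 then Finsupp.single b (1:k) else 0 := by
  obtain ⟨j, m | l⟩ := b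
  · show phi hr hκ (zL k r κ j ^ m * eL k r κ j) _ = _
    rw [map_mul, map_pow, phi_eL, phi_zL, Module.End.mul_apply, eE_single]
    show ((zE k r j ^ m) (if (i0 : ZMod 3) = j then _ else _)) = _
    by_cases h : i0 = j
    · subst h
      rw [if_pos rfl, if_pos rfl]
      rcases Nat.eq_zero_or_pos m with hm | hm
      · subst hm; rw [pow_zero, Module.End.one_apply]
      · obtain ⟨s, rfl⟩ : ∃ x, m = x + 1 := ⟨m - 1, by omega⟩
        rw [zE_pow_inl, if_pos ⟨rfl, by simpa [pbValid] using hb⟩, zero_add]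
    · rw [if_neg h, if_neg h, map_zero]
  · show phi hr hκ (tpL k r κ j l) _ = _
    rw [phi_tpL, Module.End.mul_apply, eE_single]
    show (tch k r κ l j) (if (i0 : ZMod 3) = j then _ else _) = _
    by_cases h : i0 = j
    · subst h
      rw [if_pos rfl, if_pos rfl, tch_e hr hκ l i0 1 hb.1, if_pos (by have := hb.2; omega)]
    · rw [if_neg h, if_neg h, map_zero]

noncomputable def lamAt (i : ZMod 3) : Lam k r κ →ₗ[k] k where
  toFun x := (phi hr hκ x (Finsupp.single ((i, Sum.inl 0) : PB) (1:k))) ((i, Sum.inl (r i)) : PB)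
  map_add' x y := by simp [map_add]
  map_smul' c x := by simp [map_smul]

lemma lamAt_apply (i : ZMod 3) (x : Lam k r κ) :
    lamAt hr hκ i x = (phi hr hκ x (Finsupp.single ((i, Sum.inl 0) : PB) (1:k)))
      ((i, Sum.inl (r i)) : PB) := rfl

noncomputable def lamF : Lam k r κ →ₗ[k] k :=
  lamAt hr hκ 0 + lamAt hr hκ 1 + lamAt hr hκ 2

lemma lamAt_pML {b : PB} (hb : pbValid r κ b) (i0 : ZMod 3) :
    lamAt hr hκ i0 (pML k r κ b) =
      if i0 = b.1 ∧ b = (b.1, Sum.inl (r b.1)) then 1 else 0 := by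
  rw [lamAt_apply, phi_pML_single hr hκ hb i0]
  by_cases h : i0 = b.1
  · subst h
    rw [if_pos rfl, Finsupp.single_apply]
    by_cases h2 : b = (b.1, Sum.inl (r b.1))
    · rw [if_pos (by rw [← h2]), if_pos ⟨rfl, h2⟩]
    · rw [if_neg h2, if_neg (by rintro ⟨-, hh⟩; exact h2 hh)]
  · rw [if_neg h, if_neg (by rintro ⟨hh, -⟩; exact h hh), Finsupp.zero_apply]

lemma lamF_pML {b : PB} (hb : pbValid r κ b) :
    lamF hr hκ (pML k r κ b) = omCoef k r b := by
  have hA := lamAt_pML (k := k) hr hκ hb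
  simp only [lamF, LinearMap.add_apply]
  rw [hA 0, hA 1, hA 2]
  have hval : omCoef k r b = if b = (b.1, Sum.inl (r b.1)) then 1 else 0 := by
    obtain ⟨j, m | l⟩ := b
    · show (if m = r j then (1:k) else 0) = _
      by_cases hm : m = r j
      · rw [if_pos hm, if_pos (by simp [hm])]
      · rw [if_neg hm, if_neg (by simp [hm])]
    · show (0:k) = _
      rw [if_neg (by simp)]
  rw [hval]
  have e0 : ∀ i0 : ZMod 3, i0 ≠ b.1 →
      (if i0 = b.1 ∧ b = (b.1, Sum.inl (r b.1)) then (1:k) else 0) = 0 :=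
    fun i0 hne => if_neg (by rintro ⟨hh, -⟩; exact hne hh)
  have e1 : (if b.1 = b.1 ∧ b = (b.1, Sum.inl (r b.1)) then (1:k) else 0)
      = if b = (b.1, Sum.inl (r b.1)) then (1:k) else 0 := by
    by_cases hP : b = (b.1, Sum.inl (r b.1))
    · rw [if_pos ⟨rfl, hP⟩, if_pos hP]
    · rw [if_neg (by rintro ⟨-, hh⟩; exact hP hh), if_neg hP]
  have e2 : ∀ i0 : ZMod 3, i0 = b.1 →
      (if i0 = b.1 ∧ b = (b.1, Sum.inl (r b.1)) then (1:k) else 0)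
        = if b = (b.1, Sum.inl (r b.1)) then (1:k) else 0 := by
    intro i0 hi; rw [hi]; exact e1
  rcases zmod3_cases b.1 with h | h | h
  · rw [e2 0 h.symm, e0 1 (by rw [h]; decide), e0 2 (by rw [h]; decide), add_zero, add_zero]
  · rw [e0 0 (by rw [h]; decide), e2 1 h.symm, e0 2 (by rw [h]; decide), zero_add, add_zero]
  · rw [e0 0 (by rw [h]; decide), e0 1 (by rw [h]; decide), e2 2 h.symm, zero_add, zero_add]

lemma lamF_mul {p q : PB} (hp : pbValid r κ p) (hq : pbValid r κ q) :
    lamF hr hκ (pML k r κ p * pML k r κ q) = (mulB r κ p q).elim 0 (omCoef k r) := by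
  rw [mul_pML hr hκ hp hq]
  cases hm : mulB r κ p q with
  | none => show lamF hr hκ 0 = 0; rw [map_zero]
  | some s =>
    show lamF hr hκ (pML k r κ s) = omCoef k r s
    exact lamF_pML hr hκ (mulB_valid hp hq hm)

lemma pair_symm {p q : PB} (hp : pbValid r κ p) (hq : pbValid r κ q) :
    (mulB r κ p q).elim 0 (omCoef k r) = (mulB r κ q p).elim 0 (omCoef k r) := by
  obtain ⟨j, a | l⟩ := p <;> obtain ⟨j', b | l'⟩ := q <;> simp only [mulB]
  · by_cases hj : j = j'
    · subst hj
      rw [show b + a = a + b from by omega]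
    · rw [if_neg (by rintro ⟨hh, -⟩; exact hj hh),
        if_neg (by rintro ⟨hh, -⟩; exact hj hh.symm)]
  · split_ifs <;> rfl
  · split_ifs <;> rfl
  · by_cases hsum : l + l' = 3*κ
    · have hz : (l : ZMod 3) + (l' : ZMod 3) = 0 := by
        rw [← Nat.cast_add, hsum, cast3n]
      have hiff : j = j' + (l' : ZMod 3) ↔ j' = j + (l : ZMod 3) := by
        constructor <;> intro hh <;> rw [hh, add_assoc]
        · rw [show (l' : ZMod 3) + l = 0 from by rw [add_comm]; exact hz, add_zero]
        · rw [hz, add_zero]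
      by_cases h1 : j = j' + (l' : ZMod 3)
      · rw [if_pos h1, if_pos (hiff.mp h1),
          if_neg (show ¬(l + l' < 3*κ) by omega), if_pos hsum,
          if_neg (show ¬(l' + l < 3*κ) by omega), if_pos (show l' + l = 3*κ by omega)]
        show omCoef k r (j', Sum.inl (r j')) = omCoef k r (j, Sum.inl (r j))
        show (if r j' = r j' then (1:k) else 0) = (if r j = r j then (1:k) else 0)
        rw [if_pos rfl, if_pos rfl]
      · rw [if_neg h1, if_neg (fun hh => h1 (hiff.mpr hh))]
    · split_ifs <;> first | rfl | omega
  
lemma dualB_valid {q : PB} (hq : pbValid r κ q) : pbValid r κ (dualB r κ q) := by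
  obtain ⟨j, b | l⟩ := q
  · show r j - b ≤ r j; omega
  · have h1 := hq.1
    have h2 := hq.2
    exact ⟨by omega, by omega⟩

lemma pair_dual {p q : PB} (hp : pbValid r κ p) (hq : pbValid r κ q) :
    (mulB r κ p (dualB r κ q)).elim 0 (omCoef k r) = if p = q then 1 else 0 := by
  obtain ⟨j, a | l⟩ := p <;> obtain ⟨j', b | l'⟩ := q <;> simp only [mulB, dualB]
  · have hb : b ≤ r j' := hq
    by_cases hj : j = j'
    · subst hj
      by_cases hab : a = b
      · subst hab
        rw [if_pos (⟨rfl, by omega⟩ : j = j ∧ a + (r j - a) ≤ r j)]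
        show (if a + (r j - a) = r j then (1:k) else 0) = _
        rw [if_pos (show a + (r j - a) = r j by omega),
          if_pos (rfl : ((j, Sum.inl a) : PB) = (j, Sum.inl a))]
      · have hpq : ((j, Sum.inl a) : PB) ≠ (j, Sum.inl b) := by simp [hab]
        rw [if_neg hpq]
        by_cases h1 : a + (r j - b) ≤ r j
        · rw [if_pos (⟨rfl, h1⟩ : j = j ∧ a + (r j - b) ≤ r j)]
          show (if a + (r j - b) = r j then (1:k) else 0) = 0
          rw [if_neg (show ¬(a + (r j - b) = r j) by omega)]
        · rw [if_neg (show ¬(j = j ∧ a + (r j - b) ≤ r j) from fun hh => h1 hh.2)]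
          rfl
    · have hpq : ((j, Sum.inl a) : PB) ≠ (j', Sum.inl b) := by simp [hj]
      rw [if_neg hpq,
        if_neg (show ¬(j = j' ∧ a + (r j' - b) ≤ r j) from fun hh => hj hh.1)]
      rfl
  · have hpq : ((j, Sum.inl a) : PB) ≠ (j', Sum.inr l') := by simp
    rw [if_neg hpq]
    by_cases h1 : a = 0 ∧ j = j' + (l' : ZMod 3) + ((3*κ - l' : ℕ) : ZMod 3)
    · rw [if_pos h1]; rfl
    · rw [if_neg h1]; rfl
  · have hpq : ((j, Sum.inr l) : PB) ≠ (j', Sum.inl b) := by simp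
    rw [if_neg hpq]
    by_cases h1 : r j' - b = 0 ∧ j' = j
    · rw [if_pos h1]; rfl
    · rw [if_neg h1]; rfl
  · have hl'2 : 1 ≤ l' ∧ l' + 1 ≤ 3*κ := hq
    have hl2 : 1 ≤ l ∧ l + 1 ≤ 3*κ := hp
    have hv : (j' + (l' : ZMod 3)) + ((3*κ - l' : ℕ) : ZMod 3) = j' := by
      have h0 : ((l' : ZMod 3)) + ((3*κ - l' : ℕ) : ZMod 3) = 0 := by
        rw [← Nat.cast_add, show l' + (3*κ - l') = 3*κ from by omega, cast3n]
      rw [add_assoc, h0, add_zero]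
    rw [hv]
    by_cases hj : j = j'
    · subst hj
      by_cases hl : l = l'
      · subst hl
        rw [if_pos (rfl : j = j), if_neg (show ¬(l + (3*κ - l) < 3*κ) by omega),
          if_pos (show l + (3*κ - l) = 3*κ by omega),
          if_pos (rfl : ((j, Sum.inr l) : PB) = (j, Sum.inr l))]
        show (if r (j + (l : ZMod 3)) = r (j + (l : ZMod 3)) then (1:k) else 0) = 1
        rw [if_pos rfl]
      · have hpq : ((j, Sum.inr l) : PB) ≠ (j, Sum.inr l') := by simp [hl]
        rw [if_pos (rfl : j = j), if_neg hpq]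
        by_cases h1 : l + (3*κ - l') < 3*κ
        · rw [if_pos h1]; rfl
        · rw [if_neg h1, if_neg (show ¬(l + (3*κ - l') = 3*κ) by omega)]
          rfl
    · have hpq : ((j, Sum.inr l) : PB) ≠ (j', Sum.inr l') := by simp [hj]
      rw [if_neg hj, if_neg hpq]
      rfl

lemma pML_e (i : ZMod 3) : pML k r κ (i, Sum.inl 0) = eL k r κ i := by
  show zL k r κ i ^ 0 * eL k r κ i = _
  rw [pow_zero, one_mul]

lemma pML_z (i : ZMod 3) : pML k r κ (i, Sum.inl 1) = zL k r κ i := by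
  show zL k r κ i ^ 1 * eL k r κ i = _
  rw [pow_one, Lze]

lemma pML_t (i : ZMod 3) : pML k r κ (i, Sum.inr 1) = tL k r κ i := by
  show tpL k r κ i 1 = _
  rw [show (1:ℕ) = 0 + 1 from rfl, tpL_succ, tpL_zero, Nat.cast_zero, add_zero, Lte]

end PhiSide

noncomputable def vB : {b : PB // pbValid r κ b} → Lam k r κ := fun b => pML k r κ b.1

section SpanSec
variable {k}
variable {r κ}

lemma span_vB (hr : ∀ i, 1 ≤ r i) (hκ : 1 ≤ κ) :
    Submodule.span k (Set.range (vB k r κ)) = ⊤ := by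
  set S := Submodule.span k (Set.range (vB k r κ)) with hS
  have hmem : ∀ (b : PB), pbValid r κ b → pML k r κ b ∈ S := fun b hb =>
    Submodule.subset_span ⟨⟨b, hb⟩, rfl⟩
  have h1 : (1 : Lam k r κ) ∈ S := by
    rw [← Lone (k := k) (r := r) (κ := κ)]
    have he : ∀ i : ZMod 3, eL k r κ i ∈ S := fun i => by
      rw [← pML_e]; exact hmem _ (Nat.zero_le _)
    exact add_mem (add_mem (he 0) (he 1)) (he 2)
  have hmul : ∀ x ∈ S, ∀ y ∈ S, x * y ∈ S := by
    have hSS : S * S ≤ S := by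
      rw [hS, Submodule.span_mul_span]
      apply Submodule.span_le.2
      rintro x hx
      rw [Set.mem_mul] at hx
      obtain ⟨u, ⟨bu, rfl⟩, v, ⟨bv, rfl⟩, rfl⟩ := hx
      rw [SetLike.mem_coe, ← hS]
      show vB k r κ bu * vB k r κ bv ∈ S
      show pML k r κ bu.1 * pML k r κ bv.1 ∈ S
      rw [mul_pML hr hκ bu.2 bv.2]
      cases hm : mulB r κ bu.1 bv.1 with
      | none => exact zero_mem S
      | some s => exact hmem s (mulB_valid bu.2 bv.2 hm)
    exact fun x hx y hy => hSS (Submodule.mul_mem_mul hx hy)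
  let T : Subalgebra k (Lam k r κ) := Submodule.toSubalgebra S h1 (fun x y hx hy => hmul x hx y hy)
  have hgen : ∀ g : QGen, RingQuot.mkAlgHom k (QRel k r κ) (FreeAlgebra.ι k g) ∈ T := by
    intro g
    cases g with
    | e i => show eL k r κ i ∈ S; rw [← pML_e]; exact hmem _ (Nat.zero_le _)
    | z i => show zL k r κ i ∈ S; rw [← pML_z]; exact hmem _ (hr i)
    | t i =>
        show tL k r κ i ∈ S
        rw [← pML_t]
        exact hmem _ ⟨le_refl 1, by omega⟩
  have h2 : Algebra.adjoin k
      (Set.range (fun g => RingQuot.mkAlgHom k (QRel k r κ) (FreeAlgebra.ι k g))) = ⊤ := by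
    have h3 : Set.range (fun g => RingQuot.mkAlgHom k (QRel k r κ) (FreeAlgebra.ι k g))
        = (RingQuot.mkAlgHom k (QRel k r κ)) '' (Set.range (FreeAlgebra.ι k)) := by
      rw [← Set.range_comp]; rfl
    rw [h3, Algebra.adjoin_image, FreeAlgebra.adjoin_range_ι, Algebra.map_top,
      AlgHom.range_eq_top]
    exact RingQuot.mkAlgHom_surjective k (QRel k r κ)
  have htop : (⊤ : Subalgebra k (Lam k r κ)) ≤ T := by
    rw [← h2]
    exact Algebra.adjoin_le (by rintro x ⟨g, rfl⟩; exact hgen g)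
  rw [eq_top_iff]
  intro x _
  have hx : x ∈ T := htop Algebra.mem_top
  exact (Submodule.mem_toSubalgebra).1 hx

end SpanSec



end SymAux
end
/-- `Λ = kQ/I_{(r₀,r₁,r₂,κ)}` with `r_i ≥ 2`, `κ ≥ 1` over an
algebraically closed field is a symmetric algebra: it carries a non-degenerate
associative symmetric bilinear form `θ : Λ × Λ → k`. -/
theorem lam_is_symmetric_algebra (hk : IsAlgClosed k) (r : ZMod 3 → ℕ) (κ : ℕ)
    (hr : ∀ i, 2 ≤ r i) (hκ : 1 ≤ κ) :
    ∃ θ : Lam k r κ →ₗ[k] Lam k r κ →ₗ[k] k,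
      (∀ a b : Lam k r κ, θ a b = θ b a) ∧
      (∀ a b c : Lam k r κ, θ (a * b) c = θ a (b * c)) ∧
      (∀ a : Lam k r κ, (∀ b : Lam k r κ, θ a b = 0) → a = 0) := by
  classical
  have hr1 : ∀ i, 1 ≤ r i := fun i => le_trans one_le_two (hr i)
  let θ : Lam k r κ →ₗ[k] Lam k r κ →ₗ[k] k :=
    LinearMap.mk₂ k (fun a b => SymAux.lamF hr1 hκ (a * b))
      (fun a a' b => by simp only [add_mul, map_add])
      (fun c a b => by simp only [smul_mul_assoc, map_smul])
      (fun a b b' => by simp only [mul_add, map_add])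
      (fun c a b => by simp only [mul_smul_comm, map_smul])
  have hθ : ∀ a b : Lam k r κ, θ a b = SymAux.lamF hr1 hκ (a * b) := fun a b => rfl
  have hspan := SymAux.span_vB (k := k) hr1 hκ
  refine ⟨θ, ?_, ?_, ?_⟩
  · -- symmetry
    have base : ∀ (p q : {b : SymAux.PB // SymAux.pbValid r κ b}),
        θ (SymAux.vB k r κ p) (SymAux.vB k r κ q)
          = θ (SymAux.vB k r κ q) (SymAux.vB k r κ p) := by
      intro p q
      rw [hθ, hθ]
      show SymAux.lamF hr1 hκ (SymAux.pML k r κ p.1 * SymAux.pML k r κ q.1)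
          = SymAux.lamF hr1 hκ (SymAux.pML k r κ q.1 * SymAux.pML k r κ p.1)
      rw [SymAux.lamF_mul hr1 hκ p.2 q.2, SymAux.lamF_mul hr1 hκ q.2 p.2,
        SymAux.pair_symm p.2 q.2]
    have step1 : ∀ (q : {b : SymAux.PB // SymAux.pbValid r κ b}) (a : Lam k r κ),
        θ a (SymAux.vB k r κ q) = θ (SymAux.vB k r κ q) a := by
      intro q
      have heq : θ.flip (SymAux.vB k r κ q) = θ (SymAux.vB k r κ q) :=
        LinearMap.ext_on hspan (fun y hy => by
          obtain ⟨p, rfl⟩ := hy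
          simpa using base p q)
      intro a
      simpa using LinearMap.congr_fun heq a
    intro a b
    have heq2 : θ a = θ.flip a :=
      LinearMap.ext_on hspan (fun y hy => by
        obtain ⟨q, rfl⟩ := hy
        simpa using step1 q a)
    simpa using LinearMap.congr_fun heq2 b
  · -- associativity
    intro a b c
    rw [hθ, hθ, mul_assoc]
  · -- nondegeneracy
    intro a ha
    have hmem : a ∈ Submodule.span k (Set.range (SymAux.vB k r κ)) := by
      rw [hspan]; exact Submodule.mem_top
    obtain ⟨c, hc⟩ := Finsupp.mem_span_range_iff_exists_finsupp.1 hmem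
    have hc0 : c = 0 := by
      ext q
      have hdv := SymAux.dualB_valid q.2
      have h := ha (SymAux.pML k r κ (SymAux.dualB r κ q.1))
      rw [hθ, ← hc, Finsupp.sum_mul, map_finsuppSum] at h
      have hterm : ∀ p : {b : SymAux.PB // SymAux.pbValid r κ b},
          SymAux.lamF hr1 hκ ((c p • SymAux.vB k r κ p) *
              SymAux.pML k r κ (SymAux.dualB r κ q.1))
            = c p * (if p = q then 1 else 0) := by
        intro p
        rw [smul_mul_assoc, map_smul, smul_eq_mul]
        show c p * SymAux.lamF hr1 hκ
            (SymAux.pML k r κ p.1 * SymAux.pML k r κ (SymAux.dualB r κ q.1)) = _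
        rw [SymAux.lamF_mul hr1 hκ p.2 hdv, SymAux.pair_dual p.2 q.2]
        congr 1
        by_cases hpq : p.1 = q.1
        · rw [if_pos hpq, if_pos (Subtype.ext hpq)]
        · rw [if_neg hpq, if_neg (fun hh => hpq (congrArg Subtype.val hh))]
      rw [Finsupp.sum] at h
      have h2 : (∑ p ∈ c.support, c p * (if p = q then (1:k) else 0)) = 0 := by
        refine Eq.trans ?_ h
        exact Finset.sum_congr rfl (fun p _ => (hterm p).symm)
      simp only [mul_ite, mul_one, mul_zero] at h2
      rw [Finset.sum_ite_eq' c.support q (fun p => c p)] at h2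
      simp only [Finsupp.coe_zero, Pi.zero_apply]
      by_cases hq : q ∈ c.support
      · rw [if_pos hq] at h2; exact h2
      · exact Finsupp.notMem_support_iff.1 hq
    rw [← hc, hc0, Finsupp.sum_zero_index]
end

section
/- With Λ = kQ/I_{(r_0,r_1,r_2,k)} as above, for each l with 0 ≤ l ≤ r_i − 1 the string module M_l = M[ζ_i^{-l}] (uniserial of dimension l+1, all composition factors equal to S_i) carries a natural k[[t]]/(t^{l+1})⊗_kΛ-module structure, free of rank 1 over k[[t]]/(t^{l+1}), with M_l/tM_l ≅ S_i; i.e., M_l defines a lift of the simple module S_i over k[[t]]/(t^{l+1}). -/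
variable (k : Type) [Field k]

/-- `M`, with `k`-basis `b`, is the uniserial string module `M_l = M[ζ_i^{-l}]` of
dimension `l+1`, with all composition factors `S_i`, on which the loop `ζ_i` acts as a
nilpotent Jordan block of size `l+1` and all other arrows act as zero. -/
def IsMl (k : Type) [Field k] (r : ZMod 3 → ℕ) (κ : ℕ) (i : ZMod 3) (l : ℕ)
    (M : Type) [AddCommGroup M] [Module k M] [Module (Lam k r κ) M]
    (b : Module.Basis (Fin (l + 1)) k M) : Prop :=
  (∀ (m : ZMod 3) (j : Fin (l + 1)), eL k r κ m • b j = if m = i then b j else 0) ∧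
  (∀ j : Fin (l + 1), zL k r κ i • b j =
      if h : j.1 + 1 < l + 1 then b ⟨j.1 + 1, h⟩ else 0) ∧
  (∀ (m : ZMod 3) (j : Fin (l + 1)), m ≠ i → zL k r κ m • b j = 0) ∧
  (∀ (m : ZMod 3) (j : Fin (l + 1)), tL k r κ m • b j = 0)

/-- For `Λ = kQ/I_{(r₀,r₁,r₂,κ)}` with `r_i ≥ 2`, `κ ≥ 1`, and
`0 ≤ l ≤ r_i − 1`, the uniserial string module `M_l = M[ζ_i^{-l}]` carries a natural
`k[[t]]/(t^{l+1}) ⊗_k Λ`-module structure — `t` acting through the action of `ζ_i` —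
which is free of rank one over `k[[t]]/(t^{l+1})` and satisfies `M_l/tM_l ≅ S_i`;
that is, `M_l` defines a lift of the simple module `S_i` over `k[[t]]/(t^{l+1})`. -/
theorem string_module_is_lift_of_simple (k : Type) [Field k] (hk : IsAlgClosed k)
    (r : ZMod 3 → ℕ) (κ : ℕ) (hr : ∀ i, 2 ≤ r i) (hκ : 1 ≤ κ) (i : ZMod 3)
    (l : ℕ) (hl : l + 1 ≤ r i)
    (M : Type) [AddCommGroup M] [Module k M] [Module (Lam k r κ) M]
    [IsScalarTower k (Lam k r κ) M]
    (b : Module.Basis (Fin (l + 1)) k M) (hM : IsMl k r κ i l M b) :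
    ∃ σ : (PowerSeries k ⧸ Ideal.span {(PowerSeries.X : PowerSeries k) ^ (l + 1)}) →+*
        Module.End (Lam k r κ) M,
      -- the `k[[t]]/(t^{l+1})`-module structure extends the `k`-action of `k ⊗ Λ`
      (∀ (c : k) (x : M), σ (algebraMap k _ c) x = c • x) ∧
      -- `t` acts via the action of the loop `ζ_i`
      (∀ x : M, σ (Ideal.Quotient.mk _ PowerSeries.X) x = zL k r κ i • x) ∧
      -- `M_l` is free of rank one over `k[[t]]/(t^{l+1})`
      (∃ m₀ : M, Function.Bijective fun a : (PowerSeries k ⧸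
          Ideal.span {(PowerSeries.X : PowerSeries k) ^ (l + 1)}) => σ a m₀) ∧
      -- the reduction `M_l/tM_l` is the simple module `S_i`:
      -- `tM_l = ζ_i M_l` has codimension one, and modulo it `e_i` acts as the
      -- identity and all arrows act as zero
      (Module.finrank k M = l + 1) ∧
      (∀ x : M, ∃ y : M, eL k r κ i • x - x = zL k r κ i • y) ∧
      (∀ (m : ZMod 3) (x : M), ∃ y : M, zL k r κ m • x = zL k r κ i • y) ∧
      (∀ (m : ZMod 3) (x : M), ∃ y : M, tL k r κ m • x = zL k r κ i • y) ∧
      (Module.finrank k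
        ↥(Submodule.span k (Set.range fun y : M => zL k r κ i • y)) = l) := by
  classical
  obtain ⟨hMe, hMz, hMz', hMt⟩ := hM
  -- extend basis statements to all of M by k-linearity
  have hb_ext : ∀ (f g : M →ₗ[k] M), (∀ j, f (b j) = g (b j)) → ∀ x : M, f x = g x :=
    fun f g h x => by rw [b.ext h]
  let L : Lam k r κ → (M →ₗ[k] M) := fun a =>
    { toFun := fun x => a • x
      map_add' := smul_add a
      map_smul' := fun c x => smul_comm a c x }
  have hE : ∀ x : M, eL k r κ i • x = x := fun x =>
    hb_ext (L (eL k r κ i)) LinearMap.id (fun j => by simp [L, hMe i j]) x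
  have hE' : ∀ (m : ZMod 3), m ≠ i → ∀ x : M, eL k r κ m • x = 0 := fun m hm x =>
    hb_ext (L (eL k r κ m)) 0 (fun j => by simp [L, hMe m j, hm]) x
  have hZ' : ∀ (m : ZMod 3), m ≠ i → ∀ x : M, zL k r κ m • x = 0 := fun m hm x =>
    hb_ext (L (zL k r κ m)) 0 (fun j => by simp [L, hMz' m j hm]) x
  have hT : ∀ (m : ZMod 3) (x : M), tL k r κ m • x = 0 := fun m x =>
    hb_ext (L (tL k r κ m)) 0 (fun j => by simp [L, hMt m j]) x
  -- the action of ζ_i commutes with the whole Λ-action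
  have hcomm : ∀ (a : Lam k r κ) (x : M),
      zL k r κ i • a • x = a • zL k r κ i • x := by
    intro a
    obtain ⟨f, rfl⟩ := RingQuot.mkAlgHom_surjective k (QRel k r κ) a
    induction f using FreeAlgebra.induction with
    | grade0 c =>
      intro x
      rw [AlgHom.commutes, algebraMap_smul, algebraMap_smul, smul_comm]
    | grade1 g =>
      match g with
      | QGen.e m =>
        intro x
        show zL k r κ i • eL k r κ m • x = eL k r κ m • zL k r κ i • x
        by_cases hm : m = i
        · subst hm; rw [hE, hE]
        · rw [hE' m hm, hE' m hm, smul_zero]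
      | QGen.z m =>
        intro x
        show zL k r κ i • zL k r κ m • x = zL k r κ m • zL k r κ i • x
        by_cases hm : m = i
        · subst hm; rfl
        · rw [hZ' m hm, hZ' m hm, smul_zero]
      | QGen.t m =>
        intro x
        show zL k r κ i • tL k r κ m • x = tL k r κ m • zL k r κ i • x
        rw [hT, hT, smul_zero]
    | mul a c iha ihc =>
      intro x
      simp only [map_mul, mul_smul, iha, ihc]
    | add a c iha ihc =>
      intro x
      simp only [map_add, add_smul, smul_add, iha, ihc]
  -- the Λ-endomorphism N given by the action of ζ_i
  let N : Module.End (Lam k r κ) M :=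
    { toFun := fun x => zL k r κ i • x
      map_add' := smul_add _
      map_smul' := fun a x => hcomm a x }
  have hNapp : ∀ x : M, N x = zL k r κ i • x := fun _ => rfl
  have hNb : ∀ (m : ℕ) (j : Fin (l + 1)), (N ^ m) (b j) =
      if h : j.1 + m < l + 1 then b ⟨j.1 + m, h⟩ else 0 := by
    intro m
    induction m with
    | zero => intro j; rw [dif_pos (show j.1 + 0 < l + 1 by omega)]; simp
    | succ m ih =>
      intro j
      rw [pow_succ, Module.End.mul_apply, hNapp, hMz j]
      by_cases h1 : j.1 + 1 < l + 1
      · rw [dif_pos h1, ih ⟨j.1 + 1, h1⟩]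
        by_cases h2 : j.1 + (m + 1) < l + 1
        · rw [dif_pos (show j.1 + 1 + m < l + 1 by omega), dif_pos h2]
          exact congrArg b (Fin.mk_eq_mk.mpr (by simp only [Fin.val_mk]; omega))
        · rw [dif_neg (show ¬ j.1 + 1 + m < l + 1 by omega), dif_neg h2]
      · rw [dif_neg h1, map_zero, dif_neg (show ¬ j.1 + (m + 1) < l + 1 by omega)]
  have hN0 : N ^ (l + 1) = 0 := by
    refine LinearMap.ext fun x => ?_
    have h := hb_ext ((N ^ (l + 1)).restrictScalars k) 0
      (fun j => by
        rw [LinearMap.restrictScalars_apply, hNb (l + 1) j,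
          dif_neg (show ¬ j.1 + (l + 1) < l + 1 by omega)]
        rfl) x
    simpa using h
  -- evaluation of power series at the nilpotent N
  have key : ∀ p : Polynomial k, (∀ d < l + 1, p.coeff d = 0) →
      Polynomial.aeval N p = 0 := by
    intro p hp
    obtain ⟨q, rfl⟩ := Polynomial.X_pow_dvd_iff.mpr hp
    rw [map_mul, map_pow, Polynomial.aeval_X, hN0, zero_mul]
  have key2 : ∀ p q : Polynomial k, (∀ d < l + 1, p.coeff d = q.coeff d) →
      Polynomial.aeval N p = Polynomial.aeval N q := by
    intro p q h
    have h0 := key (p - q) (fun d hd => by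
      rw [Polynomial.coeff_sub, h d hd, sub_self])
    rw [map_sub, sub_eq_zero] at h0
    exact h0
  let φ : PowerSeries k →+* Module.End (Lam k r κ) M :=
    { toFun := fun f => Polynomial.aeval N (PowerSeries.trunc (l + 1) f)
      map_one' := by
        show Polynomial.aeval N (PowerSeries.trunc (l + 1) 1) = 1
        rw [PowerSeries.trunc_one, map_one]
      map_mul' := by
        intro f g
        rw [← map_mul]
        refine (key2 _ _ fun d hd => ?_)
        rw [PowerSeries.coeff_trunc, if_pos hd]
        have h1 : (PowerSeries.trunc (l + 1) f * PowerSeries.trunc (l + 1) g).coeff d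
            = PowerSeries.coeff d
              ((PowerSeries.trunc (l + 1) f : PowerSeries k) *
                (PowerSeries.trunc (l + 1) g : PowerSeries k)) := by
          rw [← Polynomial.coe_mul, Polynomial.coeff_coe]
        have h2 : PowerSeries.coeff d
              ((PowerSeries.trunc (l + 1) f : PowerSeries k) *
                (PowerSeries.trunc (l + 1) g : PowerSeries k))
            = (PowerSeries.trunc (l + 1)
                ((PowerSeries.trunc (l + 1) f : PowerSeries k) *
                  (PowerSeries.trunc (l + 1) g : PowerSeries k))).coeff d := by
          rw [PowerSeries.coeff_trunc, if_pos hd]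
        rw [h2, PowerSeries.trunc_trunc_mul_trunc] at h1
        rw [h1, PowerSeries.coeff_trunc, if_pos hd]
      map_zero' := by
        show Polynomial.aeval N (PowerSeries.trunc (l + 1) 0) = 0
        rw [map_zero, map_zero]
      map_add' := fun f g => by
        show Polynomial.aeval N (PowerSeries.trunc (l + 1) (f + g))
          = Polynomial.aeval N (PowerSeries.trunc (l + 1) f)
            + Polynomial.aeval N (PowerSeries.trunc (l + 1) g)
        rw [map_add, map_add] }
  have hφ_poly : ∀ p : Polynomial k, φ (p : PowerSeries k) = Polynomial.aeval N p :=
    fun p => key2 _ _ (fun d hd => by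
      rw [PowerSeries.coeff_trunc, if_pos hd, Polynomial.coeff_coe])
  have hφX : φ PowerSeries.X = N := by
    rw [← Polynomial.coe_X, hφ_poly, Polynomial.aeval_X]
  have hker : ∀ f ∈ Ideal.span {(PowerSeries.X : PowerSeries k) ^ (l + 1)}, φ f = 0 := by
    intro f hf
    obtain ⟨g, rfl⟩ := Ideal.mem_span_singleton.mp hf
    rw [map_mul, map_pow, hφX, hN0, zero_mul]
  refine ⟨Ideal.Quotient.lift _ φ hker, ?_, ?_, ?_, ?_, ?_, ?_, ?_, ?_⟩
  · intro c x
    rw [← Ideal.Quotient.mk_algebraMap, Ideal.Quotient.lift_mk]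
    have : (algebraMap k (PowerSeries k) c) = ((Polynomial.C c : Polynomial k) : PowerSeries k) := by
      rw [Polynomial.coe_C]; rfl
    rw [this, hφ_poly, Polynomial.aeval_C, Module.algebraMap_end_apply]
  · intro x
    rw [Ideal.Quotient.lift_mk, hφX]
    rfl
  · -- free of rank one
    refine ⟨b ⟨0, Nat.succ_pos l⟩, ?_⟩
    have hval : ∀ f : PowerSeries k,
        Ideal.Quotient.lift _ φ hker (Ideal.Quotient.mk _ f) (b ⟨0, Nat.succ_pos l⟩)
          = ∑ j : Fin (l + 1), PowerSeries.coeff j f • b j := by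
      intro f
      rw [Ideal.Quotient.lift_mk]
      show Polynomial.aeval N (PowerSeries.trunc (l + 1) f) (b ⟨0, Nat.succ_pos l⟩) = _
      have hdeg : (PowerSeries.trunc (l + 1) f).natDegree < l + 1 := by
        rcases eq_or_ne (PowerSeries.trunc (l + 1) f) 0 with h | h
        · rw [h]; simpa using Nat.succ_pos l
        · exact (Polynomial.natDegree_lt_iff_degree_lt h).mpr
            (PowerSeries.degree_trunc_lt f (l + 1))
      rw [Polynomial.aeval_eq_sum_range' hdeg]
      rw [LinearMap.sum_apply]
      have hterm : ∀ d ∈ Finset.range (l + 1),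
          ((PowerSeries.trunc (l + 1) f).coeff d • N ^ d) (b ⟨0, Nat.succ_pos l⟩)
            = (fun d : ℕ => if h : d < l + 1 then PowerSeries.coeff d f • b ⟨d, h⟩ else 0) d := by
        intro d hd
        have hd' : d < l + 1 := Finset.mem_range.mp hd
        have h0 : (⟨0, Nat.succ_pos l⟩ : Fin (l + 1)).1 + d < l + 1 := by simpa using hd'
        rw [LinearMap.smul_apply, hNb d ⟨0, Nat.succ_pos l⟩, dif_pos h0,
          PowerSeries.coeff_trunc, if_pos hd']
        beta_reduce
        rw [dif_pos hd']
        congr 1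
        exact congrArg b (Fin.mk_eq_mk.mpr (by simp only [Fin.val_mk]; omega))
      rw [Finset.sum_congr rfl hterm, ← Fin.sum_univ_eq_sum_range]
      refine Finset.sum_congr rfl fun j _ => ?_
      rw [dif_pos j.isLt]
    constructor
    · -- injective
      intro a a' h
      obtain ⟨f, rfl⟩ := Ideal.Quotient.mk_surjective a
      obtain ⟨g, rfl⟩ := Ideal.Quotient.mk_surjective a'
      simp only [hval] at h
      have hc : ∀ j : Fin (l + 1), PowerSeries.coeff j f = PowerSeries.coeff j g := by
        have h0 : ∑ j : Fin (l + 1),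
            (PowerSeries.coeff j f - PowerSeries.coeff j g) • b j = 0 := by
          simp only [sub_smul, Finset.sum_sub_distrib, h, sub_self]
        intro j
        have := Fintype.linearIndependent_iff.mp b.linearIndependent
          (fun j : Fin (l + 1) => PowerSeries.coeff j f - PowerSeries.coeff j g) h0 j
        exact sub_eq_zero.mp this
      refine Ideal.Quotient.eq.mpr (Ideal.mem_span_singleton.mpr ?_)
      refine PowerSeries.X_pow_dvd_iff.mpr fun d hd => ?_
      rw [map_sub, hc ⟨d, hd⟩, sub_self]
    · -- surjective
      intro x
      refine ⟨Ideal.Quotient.mk _ (PowerSeries.mk fun d =>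
        if h : d < l + 1 then b.repr x ⟨d, h⟩ else 0), ?_⟩
      show Ideal.Quotient.lift _ φ hker (Ideal.Quotient.mk _ _) (b ⟨0, Nat.succ_pos l⟩) = x
      rw [hval]
      have : ∀ j : Fin (l + 1), PowerSeries.coeff j
          (PowerSeries.mk fun d => if h : d < l + 1 then b.repr x ⟨d, h⟩ else 0) • b j
            = b.repr x j • b j := by
        intro j
        rw [PowerSeries.coeff_mk, dif_pos j.isLt]
      rw [Finset.sum_congr rfl fun j _ => this j]
      exact b.sum_repr x
  · rw [Module.finrank_eq_card_basis b, Fintype.card_fin]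
  · intro x
    exact ⟨0, by rw [hE x, sub_self, smul_zero]⟩
  · intro m x
    by_cases hm : m = i
    · exact ⟨x, by rw [hm]⟩
    · exact ⟨0, by rw [hZ' m hm x, smul_zero]⟩
  · intro m x
    exact ⟨0, by rw [hT m x, smul_zero]⟩
  · -- the span of ζ_i M has dimension l
    let N' : M →ₗ[k] M := LinearMap.restrictScalars k N
    have hli : LinearIndependent k (fun j : Fin l => b j.succ) :=
      b.linearIndependent.comp _ (Fin.succ_injective l)
    have hNb' : ∀ j : Fin (l + 1), N' (b j) =
        if h : j.1 + 1 < l + 1 then b ⟨j.1 + 1, h⟩ else 0 := fun j => hMz j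
    have hsets : Submodule.span k (Set.range fun y : M => zL k r κ i • y)
        = Submodule.span k (Set.range fun j : Fin l => b j.succ) := by
      have h1 : (Set.range fun y : M => zL k r κ i • y) = Set.range ⇑N' := rfl
      rw [h1, ← LinearMap.coe_range, Submodule.span_eq]
      rw [← Submodule.map_top, ← b.span_eq, Submodule.map_span, ← Set.range_comp]
      apply le_antisymm
      · rw [Submodule.span_le]
        rintro _ ⟨j, rfl⟩
        show N' (b j) ∈ _
        rw [hNb' j]
        by_cases h : j.1 + 1 < l + 1
        · rw [dif_pos h]
          exact Submodule.subset_span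
            ⟨⟨j.1, Nat.lt_of_succ_lt_succ h⟩, congrArg b (Fin.mk_eq_mk.mpr rfl).symm ▸ rfl⟩
        · rw [dif_neg h]
          exact Submodule.zero_mem _
      · rw [Submodule.span_le]
        rintro _ ⟨j, rfl⟩
        refine Submodule.subset_span ⟨j.castSucc, ?_⟩
        show N' (b j.castSucc) = b j.succ
        rw [hNb' j.castSucc, dif_pos (by simpa using j.isLt)]
        exact congrArg b (Fin.ext rfl)
    rw [hsets, finrank_span_eq_card hli, Fintype.card_fin]
end

section
/- Let Λ be a finite dimensional self-injective k-algebra, V a finitely generated Λ-module whose stable endomorphism ring is isomorphic to k, and suppose (M,φ) and (M',φ') are two lifts of V over an object R of the category of complete local commutative Noetherian k-algebras with residue field k. If M and M' are isomorphic as R⊗_kΛ-modules, then the deformations [M,φ] and [M',φ'] are equal, i.e., there exists an R⊗_kΛ-isomorphism f̄ : M → M' with φ' ∘ (id_k ⊗_R f̄) = φ. -/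
/-- An object of the category `Ĉ` of complete local commutative Noetherian
`k`-algebras with residue field `k`. -/
structure DefRing (k : Type) [Field k] : Type 1 where
  R : Type
  [cr : CommRing R]
  [alg : Algebra k R]
  [loc : IsLocalRing R]
  [noeth : IsNoetherianRing R]
  complete : IsAdicComplete (IsLocalRing.maximalIdeal R) R
  residue : Function.Bijective (algebraMap k (IsLocalRing.ResidueField R))

attribute [instance] DefRing.cr DefRing.alg DefRing.loc DefRing.noeth

/-- A lift of the `Λ`-module `V` over `R ∈ Ĉ`: a finitely generated `R ⊗_k Λ`-module
`M`, free over `R`, together with a `Λ`-equivariant `k`-linear surjection `π : M → V`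
with kernel `m_R • M` (i.e. an isomorphism `k ⊗_R M ≅ V` of `Λ`-modules). -/
structure Lift (k Λ : Type) [Field k] [Ring Λ] [Algebra k Λ]
    (V : Type) [AddCommGroup V] [Module k V] [Module Λ V] [IsScalarTower k Λ V]
    (R : DefRing k) : Type 1 where
  M : Type
  [acg : AddCommGroup M]
  [modR : Module R.R M]
  [modL : Module Λ M]
  [modk : Module k M]
  [towR : IsScalarTower k R.R M]
  [towL : IsScalarTower k Λ M]
  [comm : SMulCommClass Λ R.R M]
  [free : Module.Free R.R M]
  [fin : Module.Finite R.R M]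
  π : M →ₗ[k] V
  equivar : ∀ (a : Λ) (m : M), π (a • m) = a • π m
  surj : Function.Surjective π
  ker : ∀ m : M, π m = 0 ↔ m ∈ (IsLocalRing.maximalIdeal R.R) • (⊤ : Submodule R.R M)

attribute [instance] Lift.acg Lift.modR Lift.modL Lift.modk Lift.towR Lift.towL
  Lift.comm Lift.free Lift.fin

variable {k Λ : Type} [Field k] [Ring Λ] [Algebra k Λ]
  {V : Type} [AddCommGroup V] [Module k V] [Module Λ V] [IsScalarTower k Λ V]

/-- The lift `N` over `R'` is (isomorphic to) the base change of the lift `Mlift`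
over `R` along the `k`-algebra homomorphism `α : R → R'`: there is a `Λ`-equivariant,
`α`-semilinear map `g : Mlift.M → N.M` compatible with the reductions to `V`
carrying an `R`-basis of `Mlift.M` to an `R'`-basis of `N.M`. -/
def Induces {R R' : DefRing k} (α : R.R →ₐ[k] R'.R)
    (Mlift : Lift k Λ V R) (N : Lift k Λ V R') : Prop :=
  ∃ g : Mlift.M →+ N.M,
    (∀ (a : Λ) (m : Mlift.M), g (a • m) = a • g m) ∧
    (∀ (c : R.R) (m : Mlift.M), g (c • m) = α c • g m) ∧
    (∀ m : Mlift.M, N.π (g m) = Mlift.π m) ∧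
    ∃ (n : ℕ) (bM : Module.Basis (Fin n) R.R Mlift.M) (bN : Module.Basis (Fin n) R'.R N.M),
      ∀ j, bN j = g (bM j)

/-- `RU ∈ Ĉ` is a universal deformation ring for the `Λ`-module `V`: there is a lift
of `V` over `RU` such that every lift of `V` over any `R' ∈ Ĉ` is induced from it
along a unique morphism `RU → R'` in `Ĉ`. -/
def IsUniversalDefRing (k Λ : Type) [Field k] [Ring Λ] [Algebra k Λ]
    (V : Type) [AddCommGroup V] [Module k V] [Module Λ V] [IsScalarTower k Λ V]
    (RU : DefRing k) : Prop :=
  ∃ MU : Lift k Λ V RU, ∀ (R' : DefRing k) (N : Lift k Λ V R'),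
    ∃! α : RU.R →ₐ[k] R'.R, Induces α MU N

/-- The lift `N` of `V` over `R'` is isomorphic to the trivial lift `R' ⊗_k V`. -/
def IsTrivialLift {R' : DefRing k} (N : Lift k Λ V R') : Prop :=
  ∃ h : V →+ N.M,
    (∀ (a : Λ) (v : V), h (a • v) = a • h v) ∧
    (∀ (c : k) (v : V), h (c • v) = algebraMap k R'.R c • h v) ∧
    (∀ v : V, N.π (h v) = v) ∧
    ∃ (n : ℕ) (bV : Module.Basis (Fin n) k V) (bN : Module.Basis (Fin n) R'.R N.M),
      ∀ j, bN j = h (bV j)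


/-! ### Auxiliary machinery -/

section ResHom

variable {k : Type} [Field k]

/-- The residue map `R → k` for `R ∈ Ĉ`. -/
noncomputable def resHom (R : DefRing k) : R.R →+* k :=
  ((RingEquiv.ofBijective (algebraMap k (IsLocalRing.ResidueField R.R)) R.residue).symm :
      IsLocalRing.ResidueField R.R →+* k).comp (IsLocalRing.residue R.R)

theorem resHom_algebraMap (R : DefRing k) (c : k) : resHom R (algebraMap k R.R c) = c := by
  have h : (IsLocalRing.residue R.R) (algebraMap k R.R c)
      = algebraMap k (IsLocalRing.ResidueField R.R) c := rfl
  simp only [resHom, RingHom.comp_apply, h]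
  exact (RingEquiv.ofBijective _ R.residue).symm_apply_apply c

theorem resHom_eq_zero_of_mem (R : DefRing k) {r : R.R}
    (hr : r ∈ IsLocalRing.maximalIdeal R.R) : resHom R r = 0 := by
  have h : IsLocalRing.residue R.R r = 0 := Ideal.Quotient.eq_zero_iff_mem.mpr hr
  simp [resHom, h]

theorem sub_resHom_mem (R : DefRing k) (r : R.R) :
    r - algebraMap k R.R (resHom R r) ∈ IsLocalRing.maximalIdeal R.R := by
  have h : IsLocalRing.residue R.R (r - algebraMap k R.R (resHom R r)) = 0 := by
    rw [map_sub]
    have h2 : (IsLocalRing.residue R.R) (algebraMap k R.R (resHom R r))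
        = algebraMap k (IsLocalRing.ResidueField R.R) (resHom R r) := rfl
    rw [h2]
    show IsLocalRing.residue R.R r
      - algebraMap k _ ((RingEquiv.ofBijective _ R.residue).symm (IsLocalRing.residue R.R r)) = 0
    rw [show ∀ x, algebraMap k (IsLocalRing.ResidueField R.R)
        ((RingEquiv.ofBijective (algebraMap k (IsLocalRing.ResidueField R.R)) R.residue).symm x)
        = x from fun x => (RingEquiv.ofBijective _ R.residue).apply_symm_apply x, sub_self]
  exact Ideal.Quotient.eq_zero_iff_mem.mp h

end ResHom

section RDual

variable (k Λ : Type) [Field k] [Ring Λ] [Algebra k Λ]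

/-- The `k`-linear dual of `Λ`, as a left `Λ`-module via right multiplication. -/
def RDualAux : Type := Λ →ₗ[k] k

namespace RDualAux

variable {k Λ}

/-- wrap -/
def of (f : Λ →ₗ[k] k) : RDualAux k Λ := f
/-- unwrap -/
def un (F : RDualAux k Λ) : Λ →ₗ[k] k := F

theorem ext' {F G : RDualAux k Λ} (h : F.un = G.un) : F = G := h

instance : AddCommGroup (RDualAux k Λ) := inferInstanceAs (AddCommGroup (Λ →ₗ[k] k))
instance : Module k (RDualAux k Λ) := inferInstanceAs (Module k (Λ →ₗ[k] k))

instance : SMul Λ (RDualAux k Λ) :=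
  ⟨fun a F => of ((un F).comp (LinearMap.mulRight k a))⟩

@[simp] theorem un_smul (a : Λ) (F : RDualAux k Λ) (x : Λ) :
    (a • F).un x = F.un (x * a) := rfl

@[simp] theorem un_add (F G : RDualAux k Λ) (x : Λ) : (F + G).un x = F.un x + G.un x := rfl
@[simp] theorem un_zero (x : Λ) : (0 : RDualAux k Λ).un x = 0 := rfl
@[simp] theorem un_ksmul (c : k) (F : RDualAux k Λ) (x : Λ) : (c • F).un x = c • F.un x := rfl
@[simp] theorem un_of (f : Λ →ₗ[k] k) : (of f).un = f := rfl

instance : Module Λ (RDualAux k Λ) where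
  one_smul F := ext' (LinearMap.ext fun x => by simp)
  mul_smul a b F := ext' (LinearMap.ext fun x => by simp [mul_assoc])
  smul_zero a := ext' (LinearMap.ext fun x => by simp)
  smul_add a F G := ext' (LinearMap.ext fun x => by simp)
  add_smul a b F := ext' (LinearMap.ext fun x => by simp [mul_add])
  zero_smul F := ext' (LinearMap.ext fun x => by simp)

instance : IsScalarTower k Λ (RDualAux k Λ) :=
  ⟨fun c a F => ext' (LinearMap.ext fun x => by
    simp only [un_smul, un_ksmul]
    rw [mul_smul_comm, map_smul])⟩

end RDualAux

end RDual

section Qmat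

variable {k Λ : Type} [Field k] [Ring Λ] [Algebra k Λ] [FiniteDimensional k Λ]

/-- Self-injectivity of `Λ` provides a `Λ`-linear splitting of the embedding of `Λ`
into a power of its `k`-linear dual, recorded here as a matrix of elements of `Λ`. -/
theorem exists_qmat (hselfinj : Module.Injective Λ Λ) {d : ℕ} (bΛ : Module.Basis (Fin d) k Λ) :
    ∃ qm : Fin d → Fin d → Λ,
      (∀ (a : Λ) (t i : Fin d),
        ∑ s, bΛ.coord t (bΛ s * a) • qm i s = a * qm i t) ∧
      ∑ i, qm i i = 1 := by
  classical
  set φ : Fin d → (Λ →ₗ[k] k) := fun i => bΛ.coord i with hφ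
  let j : Λ →ₗ[Λ] (Fin d → RDualAux k Λ) :=
    { toFun := fun a => fun i => a • RDualAux.of (φ i)
      map_add' := fun a b => by funext i; exact add_smul a b _
      map_smul' := fun a b => by funext i; exact (mul_smul a b _) }
  have hj : ∀ (a : Λ) (i : Fin d) (x : Λ), ((j a) i).un x = φ i (x * a) := fun a i x => rfl
  have hjinj : Function.Injective j := by
    rw [injective_iff_map_eq_zero]
    intro a ha
    have h1 : ∀ i : Fin d, ((j a) i).un 1 = 0 := fun i => by rw [ha]; rfl
    have h2 : ∀ i : Fin d, bΛ.coord i a = 0 := fun i => by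
      have := h1 i; rwa [hj, one_mul] at this
    exact bΛ.forall_coord_eq_zero_iff.mp h2
  obtain ⟨q, hq⟩ := hselfinj.out j hjinj LinearMap.id
  refine ⟨fun i s => q ((Pi.single i (RDualAux.of (φ s)) : Fin d → RDualAux k Λ)), ?_, ?_⟩
  · intro a t i
    have key : (Pi.single i (a • RDualAux.of (φ t)) : Fin d → RDualAux k Λ)
        = ∑ s, φ t (bΛ s * a) • (Pi.single i (RDualAux.of (φ s)) : Fin d → RDualAux k Λ) := by
      funext l
      by_cases hl : l = i
      · subst hl
        simp only [Pi.single_eq_same, Finset.sum_apply, Pi.smul_apply, Pi.single_eq_same]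
        apply RDualAux.ext'
        apply LinearMap.ext
        intro x
        have hsum : ∀ (c : Fin d → k),
            ((∑ s, c s • RDualAux.of (φ s)).un) x = ∑ s, c s • φ s x := by
          intro c
          induction (Finset.univ : Finset (Fin d)) using Finset.induction with
          | empty => simp
          | insert h ih => simp_all [RDualAux.un_add]
        rw [RDualAux.un_smul, hsum, RDualAux.un_of]
        have hx : x = ∑ s, φ s x • bΛ s := by
          rw [hφ]; simp only [Module.Basis.coord_apply]; exact (bΛ.sum_repr x).symm
        conv_lhs => rw [hx]
        rw [Finset.sum_mul, map_sum]
        apply Finset.sum_congr rfl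
        intro s _
        rw [smul_mul_assoc, map_smul, smul_eq_mul, smul_eq_mul, mul_comm]
      · simp only [Pi.single_eq_of_ne hl, Finset.sum_apply, Pi.smul_apply,
          Pi.single_eq_of_ne hl, smul_zero, Finset.sum_const_zero]
    have hqk : ∀ (c : k) (x : Fin d → RDualAux k Λ), q (c • x) = c • q x := by
      intro c x
      rw [← algebraMap_smul Λ c x, map_smul, algebraMap_smul]
    have lhs : ∑ s, φ t (bΛ s * a) • q ((Pi.single i (RDualAux.of (φ s)) : Fin d → RDualAux k Λ))
        = q ((Pi.single i (a • RDualAux.of (φ t)) : Fin d → RDualAux k Λ)) := by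
      rw [key, map_sum]
      simp_rw [hqk]
    have hsingle : (Pi.single i (a • RDualAux.of (φ t)) : Fin d → RDualAux k Λ)
        = a • (Pi.single i (RDualAux.of (φ t)) : Fin d → RDualAux k Λ) := by
      funext l
      by_cases hl : l = i
      · subst hl; simp
      · simp [Pi.single_eq_of_ne hl]
    show ∑ s, φ t (bΛ s * a) • q ((Pi.single i (RDualAux.of (φ s)) : Fin d → RDualAux k Λ))
        = a * q ((Pi.single i (RDualAux.of (φ t)) : Fin d → RDualAux k Λ))
    rw [lhs, hsingle, map_smul, smul_eq_mul]
  · have hj1 : j 1 = ∑ i, (Pi.single i (RDualAux.of (φ i)) : Fin d → RDualAux k Λ) := by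
      rw [Finset.univ_sum_single fun i => RDualAux.of (φ i)]
      funext i
      exact one_smul Λ (RDualAux.of (φ i))
    have := hq 1
    rw [hj1, map_sum] at this
    simpa using this

end Qmat

section LiftLemmas

variable {k Λ : Type} [Field k] [Ring Λ] [Algebra k Λ]
  {V : Type} [AddCommGroup V] [Module k V] [Module Λ V] [IsScalarTower k Λ V]

theorem Lift.pi_smul {R : DefRing k} (N : Lift k Λ V R) (r : R.R) (m : N.M) :
    N.π (r • m) = resHom R r • N.π m := by
  have hmem : r • m - algebraMap k R.R (resHom R r) • m
      ∈ (IsLocalRing.maximalIdeal R.R) • (⊤ : Submodule R.R N.M) := by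
    rw [← sub_smul]
    exact Submodule.smul_mem_smul (sub_resHom_mem R r) Submodule.mem_top
  have h0 : N.π (r • m - algebraMap k R.R (resHom R r) • m) = 0 := (N.ker _).mpr hmem
  rw [map_sub] at h0
  have h1 : N.π (algebraMap k R.R (resHom R r) • m) = resHom R r • N.π m := by
    rw [algebraMap_smul, map_smul]
  rw [h1] at h0
  exact sub_eq_zero.mp h0

theorem Lift.exists_functional_lift {R : DefRing k} (N : Lift k Λ V R) (e : V →ₗ[k] k) :
    ∃ E : N.M →ₗ[R.R] R.R, ∀ m, resHom R (E m) = e (N.π m) := by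
  classical
  let bM := Module.Free.chooseBasis R.R N.M
  refine ⟨bM.constr ℕ (fun l => algebraMap k R.R (e (N.π (bM l)))), fun m => ?_⟩
  conv_rhs => rw [← bM.sum_repr m]
  rw [map_sum, map_sum, Module.Basis.constr_apply_fintype, map_sum]
  apply Finset.sum_congr rfl
  intro l _
  rw [Module.Basis.equivFun_apply, smul_eq_mul, map_mul, resHom_algebraMap, N.pi_smul, map_smul,
    smul_eq_mul]

/-- The `R`-linear `Λ`-equivariant endomorphism of `N.M` given by the action of `a : Λ`. -/
def Lift.actL {R : DefRing k} (N : Lift k Λ V R) (a : Λ) : N.M →ₗ[R.R] N.M where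
  toFun m := a • m
  map_add' x y := smul_add a x y
  map_smul' r x := smul_comm a r x

/-- **Key lifting lemma**: a map `V → V` of the shape `v ↦ α(v) • w` lifts to an
`R ⊗ Λ`-linear map `N.M → N'.M`. Uses self-injectivity of `Λ`. -/
theorem exists_lift_of_factor [FiniteDimensional k Λ] (hselfinj : Module.Injective Λ Λ)
    {R : DefRing k} (N N' : Lift k Λ V R) (α : V →ₗ[Λ] Λ) (w : V) :
    ∃ τ : N.M →ₗ[R.R] N'.M, (∀ (a : Λ) (m : N.M), τ (a • m) = a • τ m) ∧
      (∀ m : N.M, N'.π (τ m) = α (N.π m) • w) := by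
  classical
  haveI : SMulCommClass R.R Λ N.M := SMulCommClass.symm Λ R.R N.M
  haveI : SMulCommClass R.R Λ N'.M := SMulCommClass.symm Λ R.R N'.M
  set d := Module.finrank k Λ with hd
  set bΛ : Module.Basis (Fin d) k Λ := Module.finBasis k Λ with hbΛ
  obtain ⟨qm, hII, hIII⟩ := exists_qmat (k := k) (Λ := Λ) hselfinj bΛ
  obtain ⟨mw, hmw⟩ := N'.surj w
  choose E hE using fun i : Fin d =>
    N.exists_functional_lift ((bΛ.coord i) ∘ₗ (α.restrictScalars k))
  set τ : N.M →ₗ[R.R] N'.M :=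
    ∑ i, ∑ s, (LinearMap.toSpanSingleton R.R N'.M (qm i s • mw)) ∘ₗ ((E i) ∘ₗ (N.actL (bΛ s)))
    with hτ
  have happ : ∀ m, τ m = ∑ i, ∑ s, E i (bΛ s • m) • (qm i s • mw) := by
    intro m
    rw [hτ]
    simp [LinearMap.sum_apply, LinearMap.comp_apply, LinearMap.toSpanSingleton_apply, Lift.actL]
  refine ⟨τ, ?_, ?_⟩
  · intro a m
    rw [happ, happ, Finset.smul_sum]
    apply Finset.sum_congr rfl; intro i _
    have hEexp : ∀ s, E i (bΛ s • (a • m))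
        = ∑ t, algebraMap k R.R (bΛ.coord t (bΛ s * a)) * E i (bΛ t • m) := by
      intro s
      rw [← mul_smul]
      have hx : (bΛ s * a : Λ) = ∑ t, bΛ.coord t (bΛ s * a) • bΛ t := by
        simp only [Module.Basis.coord_apply]
        exact (bΛ.sum_repr _).symm
      conv_lhs => rw [hx]
      rw [Finset.sum_smul, map_sum]
      apply Finset.sum_congr rfl; intro t _
      rw [smul_assoc, ← algebraMap_smul R.R (bΛ.coord t (bΛ s * a)) ((bΛ t) • m), map_smul,
        smul_eq_mul]
    calc ∑ s, E i (bΛ s • (a • m)) • (qm i s • mw)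
        = ∑ s, ∑ t, (algebraMap k R.R (bΛ.coord t (bΛ s * a)) * E i (bΛ t • m))
            • (qm i s • mw) := by
          apply Finset.sum_congr rfl; intro s _; rw [hEexp s, Finset.sum_smul]
      _ = ∑ t, E i (bΛ t • m) • ∑ s, algebraMap k R.R (bΛ.coord t (bΛ s * a))
            • (qm i s • mw) := by
          rw [Finset.sum_comm]
          apply Finset.sum_congr rfl; intro t _
          rw [Finset.smul_sum]
          apply Finset.sum_congr rfl; intro s _
          rw [mul_comm, mul_smul]
      _ = ∑ t, E i (bΛ t • m) • (a • (qm i t • mw)) := by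
          apply Finset.sum_congr rfl; intro t _
          congr 1
          have hrw : ∀ s, algebraMap k R.R (bΛ.coord t (bΛ s * a)) • (qm i s • mw)
              = (bΛ.coord t (bΛ s * a) • qm i s) • mw := by
            intro s
            rw [algebraMap_smul, smul_assoc]
          simp_rw [hrw]
          rw [← Finset.sum_smul, hII a t i, mul_smul]
      _ = a • ∑ s, E i (bΛ s • m) • (qm i s • mw) := by
          rw [Finset.smul_sum]
          apply Finset.sum_congr rfl; intro t _
          rw [smul_comm]
  · intro m
    rw [happ, map_sum]
    have hred : ∀ i s, N'.π (E i (bΛ s • m) • (qm i s • mw))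
        = bΛ.coord i (bΛ s * α (N.π m)) • (qm i s • w) := by
      intro i s
      rw [N'.pi_smul, hE i]
      have h1 : N'.π (qm i s • mw) = qm i s • w := by
        rw [N'.equivar, hmw]
      rw [h1]
      congr 1
      rw [LinearMap.comp_apply, LinearMap.restrictScalars_apply, N.equivar, map_smul,
        smul_eq_mul]
    simp_rw [map_sum, hred]
    have hfin : ∀ i, ∑ s, bΛ.coord i (bΛ s * α (N.π m)) • (qm i s • w)
        = (α (N.π m) * qm i i) • w := by
      intro i
      have hrw : ∀ s, bΛ.coord i (bΛ s * α (N.π m)) • (qm i s • w)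
          = (bΛ.coord i (bΛ s * α (N.π m)) • qm i s) • w := fun s => (smul_assoc _ _ _).symm
      simp_rw [hrw]
      rw [← Finset.sum_smul, hII (α (N.π m)) i i]
    simp_rw [hfin]
    rw [← Finset.sum_smul, ← Finset.mul_sum, hIII, mul_one]

/-- A `Λ`-linear endomorphism of a finitely generated module factoring through a
projective factors through a finite free module, i.e. decomposes as a finite sum
`v ↦ ∑ αᵢ(v) • wᵢ` with `αᵢ : V →ₗ[Λ] Λ`. -/
theorem factor_decomp [Module.Finite Λ V] {g : V →ₗ[Λ] V}
    (hg : FactorsThroughProjective Λ V g) :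
    ∃ (n : ℕ) (αs : Fin n → (V →ₗ[Λ] Λ)) (ws : Fin n → V),
      ∀ v, g v = ∑ i, αs i v • ws i := by
  classical
  obtain ⟨F⟩ := hg
  letI := F.acg; letI := F.mod
  obtain ⟨s, hs⟩ := Module.projective_def.mp F.proj
  obtain ⟨S, hS⟩ := Module.Finite.fg_top (R := Λ) (M := V)
  set s' : V →ₗ[Λ] (F.P →₀ Λ) := s ∘ₗ F.g with hs'
  set T : Finset F.P := S.biUnion (fun v => (s' v).support) with hT
  have hsupp : ∀ v : V, (s' v).support ⊆ T := by
    intro v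
    have hv : s' v ∈ Finsupp.supported Λ Λ (↑T : Set F.P) := by
      have hle : (⊤ : Submodule Λ V) ≤ (Finsupp.supported Λ Λ (↑T : Set F.P)).comap s' := by
        rw [← hS, Submodule.span_le]
        intro x hx
        simp only [SetLike.mem_coe, Submodule.mem_comap, Finsupp.mem_supported]
        intro p hp
        exact Finset.mem_coe.mpr (Finset.mem_biUnion.mpr ⟨x, hx, Finset.mem_coe.mp hp⟩)
      exact hle Submodule.mem_top
    exact Finset.coe_subset.mp (Finsupp.mem_supported Λ _ |>.mp hv)
  have hform : ∀ v, g v = ∑ p ∈ T, (s' v) p • F.h p := by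
    intro v
    have h1 : g v = F.h (F.g v) := by
      rw [show F.h (F.g v) = (F.h ∘ₗ F.g) v from rfl, F.fact]
    have h2 : F.g v = Finsupp.linearCombination Λ id (s' v) := (hs (F.g v)).symm
    rw [h1, h2, Finsupp.linearCombination_apply, map_finsuppSum,
      Finsupp.sum_of_support_subset _ (hsupp v) _ (by intro p _; simp)]
    apply Finset.sum_congr rfl
    intro p _
    rw [map_smul]
    rfl
  refine ⟨T.card, fun i => (Finsupp.lapply ((T.equivFin.symm i : {x // x ∈ T}) : F.P)) ∘ₗ s',
    fun i => F.h ((T.equivFin.symm i : {x // x ∈ T}) : F.P), ?_⟩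
  intro v
  rw [hform v]
  rw [← Finset.sum_coe_sort T (fun p => (s' v) p • F.h p)]
  rw [← Equiv.sum_comp T.equivFin.symm (fun x : {x // x ∈ T} => (s' v) ↑x • F.h ↑x)]
  rfl

end LiftLemmas

/-- Let `Λ` be a finite dimensional self-injective `k`-algebra and
`V` a finitely generated `Λ`-module with stable endomorphism ring isomorphic to `k`.
If `(M,φ)` and `(M',φ')` are lifts of `V` over `R ∈ Ĉ` and `M ≅ M'` as
`R ⊗_k Λ`-modules, then the lifts are isomorphic: there is an `R ⊗_k Λ`-isomorphism
`f̄ : M → M'` with `φ' ∘ (id_k ⊗ f̄) = φ`. -/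
theorem lift_iso_of_module_iso (k Λ : Type) [Field k] [Ring Λ] [Algebra k Λ]
    [FiniteDimensional k Λ] (hselfinj : Module.Injective Λ Λ)
    (V : Type) [AddCommGroup V] [Module k V] [Module Λ V] [IsScalarTower k Λ V]
    [Module.Finite Λ V]
    (hstab : StableEndIsK k Λ V)
    (R : DefRing k) (N N' : Lift k Λ V R)
    (hiso : ∃ f : N.M ≃+ N'.M,
      (∀ (a : Λ) (m : N.M), f (a • m) = a • f m) ∧
      (∀ (c : R.R) (m : N.M), f (c • m) = c • f m)) :
    ∃ f : N.M ≃+ N'.M,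
      (∀ (a : Λ) (m : N.M), f (a • m) = a • f m) ∧
      (∀ (c : R.R) (m : N.M), f (c • m) = c • f m) ∧
      (∀ m : N.M, N'.π (f m) = N.π m) := by
  classical
  obtain ⟨f, hfΛ, hfR⟩ := hiso
  haveI : SMulCommClass R.R Λ N.M := SMulCommClass.symm Λ R.R N.M
  haveI : SMulCommClass R.R Λ N'.M := SMulCommClass.symm Λ R.R N'.M
  -- inverse is also equivariant
  have hf'Λ : ∀ (a : Λ) (m' : N'.M), f.symm (a • m') = a • f.symm m' := by
    intro a m'
    apply f.injective
    rw [f.apply_symm_apply, hfΛ, f.apply_symm_apply]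
  have hf'R : ∀ (c : R.R) (m' : N'.M), f.symm (c • m') = c • f.symm m' := by
    intro c m'
    apply f.injective
    rw [f.apply_symm_apply, hfR, f.apply_symm_apply]
  -- f and f.symm preserve the m-adic kernels
  have hker : ∀ m : N.M, N.π m = 0 → N'.π (f m) = 0 := by
    intro m hm
    have hmem := (N.ker m).mp hm
    have hmem' : f m ∈ (IsLocalRing.maximalIdeal R.R) • (⊤ : Submodule R.R N'.M) := by
      refine Submodule.smul_induction_on hmem ?_ ?_
      · intro r hr n _
        rw [hfR]
        exact Submodule.smul_mem_smul hr Submodule.mem_top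
      · intro x y hx hy
        rw [map_add]
        exact Submodule.add_mem _ hx hy
    exact (N'.ker _).mpr hmem'
  have hker' : ∀ m' : N'.M, N'.π m' = 0 → N.π (f.symm m') = 0 := by
    intro m' hm'
    have hmem := (N'.ker m').mp hm'
    have hmem' : f.symm m' ∈ (IsLocalRing.maximalIdeal R.R) • (⊤ : Submodule R.R N.M) := by
      refine Submodule.smul_induction_on hmem ?_ ?_
      · intro r hr n _
        rw [hf'R]
        exact Submodule.smul_mem_smul hr Submodule.mem_top
      · intro x y hx hy
        rw [map_add]
        exact Submodule.add_mem _ hx hy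
    exact (N.ker _).mpr hmem'
  have hcongr : ∀ m₁ m₂ : N.M, N.π m₁ = N.π m₂ → N'.π (f m₁) = N'.π (f m₂) := by
    intro m₁ m₂ h
    have h0 : N.π (m₁ - m₂) = 0 := by rw [map_sub, h, sub_self]
    have h1 := hker _ h0
    rw [map_sub, map_sub] at h1
    exact sub_eq_zero.mp h1
  have hcongr' : ∀ m₁ m₂ : N'.M, N'.π m₁ = N'.π m₂ → N.π (f.symm m₁) = N.π (f.symm m₂) := by
    intro m₁ m₂ h
    have h0 : N'.π (m₁ - m₂) = 0 := by rw [map_sub, h, sub_self]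
    have h1 := hker' _ h0
    rw [map_sub, map_sub] at h1
    exact sub_eq_zero.mp h1
  -- the induced endomorphism σ of V and its inverse σ'
  have hσdef : ∀ v : V, ∃ m : N.M, N.π m = v := N.surj
  have hσ : ∀ m : N.M, N'.π (f (Function.surjInv N.surj (N.π m))) = N'.π (f m) :=
    fun m => hcongr _ _ (Function.surjInv_eq N.surj (N.π m))
  have hσ' : ∀ m' : N'.M, N.π (f.symm (Function.surjInv N'.surj (N'.π m'))) = N.π (f.symm m') :=
    fun m' => hcongr' _ _ (Function.surjInv_eq N'.surj (N'.π m'))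
  let σ : V →ₗ[Λ] V :=
    { toFun := fun v => N'.π (f (Function.surjInv N.surj v))
      map_add' := by
        intro v₁ v₂
        obtain ⟨m₁, rfl⟩ := N.surj v₁
        obtain ⟨m₂, rfl⟩ := N.surj v₂
        beta_reduce
        rw [← map_add, hσ (m₁ + m₂), hσ m₁, hσ m₂, map_add, map_add]
      map_smul' := by
        intro a v
        obtain ⟨m, rfl⟩ := N.surj v
        rw [← N.equivar, hσ (a • m), hσ m, hfΛ, N'.equivar, RingHom.id_apply] }
  let σ' : V →ₗ[Λ] V :=
    { toFun := fun v => N.π (f.symm (Function.surjInv N'.surj v))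
      map_add' := by
        intro v₁ v₂
        obtain ⟨m₁, rfl⟩ := N'.surj v₁
        obtain ⟨m₂, rfl⟩ := N'.surj v₂
        beta_reduce
        rw [← map_add, hσ' (m₁ + m₂), hσ' m₁, hσ' m₂, map_add, map_add]
      map_smul' := by
        intro a v
        obtain ⟨m, rfl⟩ := N'.surj v
        rw [← N'.equivar, hσ' (a • m), hσ' m, hf'Λ, N.equivar, RingHom.id_apply] }
  have hσapp : ∀ m : N.M, σ (N.π m) = N'.π (f m) := fun m => hσ m
  have hσ'app : ∀ m' : N'.M, σ' (N'.π m') = N.π (f.symm m') := fun m' => hσ' m'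
  have hσσ : ∀ v : V, σ' (σ v) = v := by
    intro v
    obtain ⟨m, rfl⟩ := N.surj v
    rw [hσapp, hσ'app, f.symm_apply_apply]
  -- decompose σ as c • id + (factor through projective)
  obtain ⟨c, g, hgc, hgproj⟩ := hstab.1 σ
  have hcne : c ≠ 0 := by
    intro hc0
    apply hstab.2
    obtain ⟨F⟩ := hgproj
    letI := F.acg; letI := F.mod
    refine ⟨{ P := F.P, proj := F.proj, g := F.g, h := σ' ∘ₗ F.h, fact := ?_ }⟩
    apply LinearMap.ext
    intro x
    have h1 : F.h (F.g x) = g x := by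
      rw [show F.h (F.g x) = (F.h ∘ₗ F.g) x from rfl, F.fact]
    have h2 : g x = σ x := by rw [hgc, hc0, zero_smul, sub_zero]
    simp only [LinearMap.comp_apply, LinearMap.id_apply]
    rw [h1, h2, hσσ]
  -- c is a unit in R
  have hu : IsUnit (algebraMap k R.R c) := by
    by_contra hnu
    have hmem : algebraMap k R.R c ∈ IsLocalRing.maximalIdeal R.R :=
      IsLocalRing.mem_maximalIdeal _ |>.mpr hnu
    have h0 := resHom_eq_zero_of_mem R hmem
    rw [resHom_algebraMap] at h0
    exact hcne h0
  obtain ⟨uu, huu⟩ := hu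
  -- decompose g and lift it
  obtain ⟨nn, αs, ws, hdec⟩ := factor_decomp hgproj
  choose τ hτΛ hτred using fun i : Fin nn =>
    exists_lift_of_factor hselfinj N N' (αs i) (ws i)
  let fL : N.M →ₗ[R.R] N'.M :=
    { toFun := f, map_add' := fun x y => map_add f x y, map_smul' := hfR }
  set F2 : N.M →ₗ[R.R] N'.M := (↑uu⁻¹ : R.R) • (fL - ∑ i, τ i) with hF2
  have hF2app : ∀ m, F2 m = (↑uu⁻¹ : R.R) • (f m - ∑ i, τ i m) := by
    intro m
    rw [hF2]
    simp only [LinearMap.smul_apply, LinearMap.sub_apply, LinearMap.coe_sum,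
      Finset.sum_apply]
    rfl
  have hF2Λ : ∀ (a : Λ) (m : N.M), F2 (a • m) = a • F2 m := by
    intro a m
    rw [hF2app, hF2app, hfΛ]
    have h1 : ∑ i, τ i (a • m) = a • ∑ i, τ i m := by
      rw [Finset.smul_sum]
      exact Finset.sum_congr rfl fun i _ => hτΛ i a m
    rw [h1, ← smul_sub, smul_comm]
  have hrc : resHom R (↑uu⁻¹ : R.R) * c = 1 := by
    have h1 : (↑uu⁻¹ : R.R) * ↑uu = 1 := uu.inv_mul
    have h2 := congrArg (resHom R) h1
    rw [map_mul, map_one, huu, resHom_algebraMap] at h2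
    exact h2
  have hF2red : ∀ m, N'.π (F2 m) = N.π m := by
    intro m
    rw [hF2app, N'.pi_smul, map_sub, map_sum]
    simp_rw [hτred]
    rw [← hσapp m, ← hdec (N.π m)]
    have hgσ : σ (N.π m) - g (N.π m) = c • N.π m := by
      rw [hgc]
      exact sub_sub_cancel _ _
    rw [hgσ, smul_smul, hrc, one_smul]
  have hF2surj : Function.Surjective F2 := by
    have hle : (⊤ : Submodule R.R N'.M)
        ≤ LinearMap.range F2 ⊔ (IsLocalRing.maximalIdeal R.R) • ⊤ := by
      intro m' _
      obtain ⟨m, hm⟩ := N.surj (N'.π m')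
      have h0 : N'.π (m' - F2 m) = 0 := by rw [map_sub, hF2red, hm, sub_self]
      have hmem := (N'.ker _).mp h0
      have hsplit : m' = F2 m + (m' - F2 m) := by rw [add_sub_cancel]
      rw [hsplit]
      exact Submodule.add_mem_sup (LinearMap.mem_range_self F2 m) hmem
    have hr := Submodule.le_of_le_smul_of_le_jacobson_bot (Module.finite_def.mp N'.fin)
      (IsLocalRing.maximalIdeal_le_jacobson ⊥) hle
    rw [← LinearMap.range_eq_top]
    exact top_le_iff.mp hr
  have hF2inj : Function.Injective F2 := by
    let f'L : N'.M →ₗ[R.R] N.M :=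
      { toFun := f.symm, map_add' := fun x y => map_add f.symm x y, map_smul' := hf'R }
    have hGsurj : Function.Surjective (f'L ∘ₗ F2) := f.symm.surjective.comp hF2surj
    have hGinj := OrzechProperty.injective_of_surjective_endomorphism (f'L ∘ₗ F2) hGsurj
    intro x y hxy
    apply hGinj
    simp only [LinearMap.comp_apply]
    rw [hxy]
  refine ⟨(LinearEquiv.ofBijective F2 ⟨hF2inj, hF2surj⟩).toAddEquiv, ?_, ?_, ?_⟩
  · intro a m
    exact hF2Λ a m
  · intro cc m
    exact map_smul F2 cc m
  · intro m
    exact hF2red m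
end
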